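/- arXiv:1512.07749 — 4 statements merged into one kernel-verified Lean document; each statement's English description precedes it below -/
import Mathlib

section
/- Let n ≥ 2, let U be an open subset of E = EuclideanSpace ℝ (Fin n), let Φ : U → ℝ be C¹ and u : U → ℝ be C². Define the vector field F : U → E by F(x) = exp((n−2)Φ(x))·( (‖∇u(x)‖²/2)·x − ⟨x, ∇u(x)⟩·∇u(x) ). Then for every x ∈ U, the divergence of F at x (the trace of the Fréchet derivative of F at x) equals exp((n−2)Φ(x))·( ((n−2)/2)·(1 + ⟨x, ∇Φ(x)⟩)·‖∇u(x)‖² − ⟨x, ∇u(x)⟩·( Δu(x) + (n−2)·⟨∇Φ(x), ∇u(x)⟩ ) ). -/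
open MeasureTheory Metric Set RealInnerProductSpace

/-- The Hessian of `u` at `x`, as a bilinear form: second derivative in directions `v`, `w`. -/
noncomputable def hess {n : ℕ} (u : EuclideanSpace ℝ (Fin n) → ℝ)
    (x v w : EuclideanSpace ℝ (Fin n)) : ℝ :=
  fderiv ℝ (fun y => fderiv ℝ u y v) x w

/-- The Euclidean Laplacian of `u` at `x`: the trace of the second derivative. -/
noncomputable def lap {n : ℕ} (u : EuclideanSpace ℝ (Fin n) → ℝ)
    (x : EuclideanSpace ℝ (Fin n)) : ℝ :=
  ∑ i : Fin n, hess u x (EuclideanSpace.single i 1) (EuclideanSpace.single i 1)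

/-- The divergence of a vector field: the trace of its Fréchet derivative. -/
noncomputable def divergence {n : ℕ}
    (F : EuclideanSpace ℝ (Fin n) → EuclideanSpace ℝ (Fin n))
    (x : EuclideanSpace ℝ (Fin n)) : ℝ :=
  ∑ i : Fin n, fderiv ℝ F x (EuclideanSpace.single i 1) i

/-! Divergence is the trace of the derivative, so it obeys the Leibniz rule
`div (f • V) = f * div V + df (V)`. For the Euclidean Pohožaev field
`V = (‖∇u‖² / 2) • x - ⟪x, ∇u⟫ • ∇u` this gives
`div V = (n / 2) ‖∇u‖² + ⟪D²u x, ∇u⟫ - ‖∇u‖² - ⟪x, D²u ∇u⟫ - ⟪x, ∇u⟫ Δu`,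
and the two Hessian terms cancel because the second derivative of a `C²` function is symmetric.
The conformal weight `e^{(n-2)Φ}` then only adds `(n - 2) e^{(n-2)Φ} ⟪∇Φ, V⟫`. -/

section Divergence

variable {n : ℕ} {x : EuclideanSpace ℝ (Fin n)}

lemma divergence_eq_trace (F : EuclideanSpace ℝ (Fin n) → EuclideanSpace ℝ (Fin n)) :
    divergence F x = LinearMap.trace ℝ _ (fderiv ℝ F x).toLinearMap := by
  rw [LinearMap.trace_eq_matrix_trace ℝ (EuclideanSpace.basisFun (Fin n) ℝ).toBasis,
    Matrix.trace, divergence]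
  simp [LinearMap.toMatrix_apply]

lemma divergence_id : divergence (fun y : EuclideanSpace ℝ (Fin n) => y) x = n := by
  rw [divergence_eq_trace, fderiv_fun_id, ContinuousLinearMap.coe_id, LinearMap.trace_id,
    finrank_euclideanSpace_fin]

lemma divergence_sub {F G : EuclideanSpace ℝ (Fin n) → EuclideanSpace ℝ (Fin n)}
    (hF : DifferentiableAt ℝ F x) (hG : DifferentiableAt ℝ G x) :
    divergence (fun y => F y - G y) x = divergence F x - divergence G x := by
  simp only [divergence_eq_trace, fderiv_fun_sub hF hG, ContinuousLinearMap.toLinearMap_sub,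
    map_sub]

lemma divergence_smul {f : EuclideanSpace ℝ (Fin n) → ℝ}
    {F : EuclideanSpace ℝ (Fin n) → EuclideanSpace ℝ (Fin n)}
    (hf : DifferentiableAt ℝ f x) (hF : DifferentiableAt ℝ F x) :
    divergence (fun y => f y • F y) x = f x * divergence F x + fderiv ℝ f x (F x) := by
  simp only [divergence_eq_trace, fderiv_fun_smul hf hF, ContinuousLinearMap.toLinearMap_add,
    ContinuousLinearMap.toLinearMap_smul, map_add, map_smul, smul_eq_mul]
  congr 1
  exact LinearMap.trace_smulRight _ _

end Divergence

lemma ContDiffAt.differentiableAt_fderiv {E F : Type*} [NormedAddCommGroup E] [NormedSpace ℝ E]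
    [NormedAddCommGroup F] [NormedSpace ℝ F] {u : E → F} {x : E} (hu : ContDiffAt ℝ 2 u x) :
    DifferentiableAt ℝ (fderiv ℝ u) x :=
  (hu.fderiv_right le_rfl).differentiableAt one_ne_zero

section Gradient

variable {n : ℕ} {u : EuclideanSpace ℝ (Fin n) → ℝ} {x : EuclideanSpace ℝ (Fin n)}

lemma gradient_apply (u : EuclideanSpace ℝ (Fin n) → ℝ) (y : EuclideanSpace ℝ (Fin n))
    (i : Fin n) : gradient u y i = fderiv ℝ u y (EuclideanSpace.single i 1) := by
  rw [← inner_gradient_left, EuclideanSpace.inner_single_right]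
  simp

lemma differentiableAt_gradient (hu : DifferentiableAt ℝ (fderiv ℝ u) x) :
    DifferentiableAt ℝ (gradient u) x := by
  refine differentiableAt_euclidean.2 fun i => ?_
  simp only [gradient_apply]
  exact hu.clm_apply (differentiableAt_const _)

lemma inner_fderiv_gradient (hu : DifferentiableAt ℝ (fderiv ℝ u) x)
    (v w : EuclideanSpace ℝ (Fin n)) :
    ⟪fderiv ℝ (gradient u) x v, w⟫ = fderiv ℝ (fderiv ℝ u) x v w := by
  have h := fderiv_inner_apply ℝ (differentiableAt_gradient hu) (differentiableAt_const w) v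
  simp only [inner_gradient_left, fderiv_clm_apply hu (differentiableAt_const w)] at h
  simpa using h.symm

lemma inner_fderiv_gradient_comm (hu : ContDiffAt ℝ 2 u x) (v w : EuclideanSpace ℝ (Fin n)) :
    ⟪fderiv ℝ (gradient u) x v, w⟫ = ⟪v, fderiv ℝ (gradient u) x w⟫ := by
  rw [← real_inner_comm v, inner_fderiv_gradient hu.differentiableAt_fderiv,
    inner_fderiv_gradient hu.differentiableAt_fderiv, hu.isSymmSndFDerivAt (by simp)]

lemma divergence_gradient (hu : DifferentiableAt ℝ (fderiv ℝ u) x) :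
    divergence (gradient u) x = lap u x := by
  refine Finset.sum_congr rfl fun i _ => ?_
  rw [hess, fderiv_clm_apply hu (differentiableAt_const _)]
  simp [← inner_fderiv_gradient hu, EuclideanSpace.inner_single_right]

end Gradient

lemma DifferentiableAt.norm_sq_div_two {E F : Type*} [NormedAddCommGroup E] [NormedSpace ℝ E]
    [NormedAddCommGroup F] [InnerProductSpace ℝ F] {f : E → F} {x : E}
    (hf : DifferentiableAt ℝ f x) : DifferentiableAt ℝ (fun y => ‖f y‖ ^ 2 / 2) x := by
  simpa only [div_eq_mul_inv] using (hf.norm_sq ℝ).mul_const (2⁻¹ : ℝ)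

section Pohozaev

variable {n : ℕ} {u : EuclideanSpace ℝ (Fin n) → ℝ} {x : EuclideanSpace ℝ (Fin n)}

noncomputable def pohozaevField (u : EuclideanSpace ℝ (Fin n) → ℝ)
    (y : EuclideanSpace ℝ (Fin n)) : EuclideanSpace ℝ (Fin n) :=
  (‖gradient u y‖ ^ 2 / 2) • y - ⟪y, gradient u y⟫ • gradient u y

lemma differentiableAt_pohozaevField (hu : DifferentiableAt ℝ (fderiv ℝ u) x) :
    DifferentiableAt ℝ (pohozaevField u) x := by
  have hg := differentiableAt_gradient hu
  exact (hg.norm_sq_div_two.fun_smul differentiableAt_fun_id).fun_sub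
    ((differentiableAt_fun_id.inner ℝ hg).fun_smul hg)

lemma divergence_pohozaevField (hu : ContDiffAt ℝ 2 u x) :
    divergence (pohozaevField u) x =
      ((n : ℝ) - 2) / 2 * ‖gradient u x‖ ^ 2 - ⟪x, gradient u x⟫ * lap u x := by
  have hg := differentiableAt_gradient hu.differentiableAt_fderiv
  have hnorm := hg.norm_sq_div_two
  have hradial : DifferentiableAt ℝ (fun y => ⟪y, gradient u y⟫) x :=
    differentiableAt_fun_id.inner ℝ hg
  have hnorm' : fderiv ℝ (fun y => ‖gradient u y‖ ^ 2 / 2) x x =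
      ⟪fderiv ℝ (gradient u) x x, gradient u x⟫ := by
    have h := hg.hasFDerivAt.norm_sq.mul_const (2⁻¹ : ℝ)
    simp only [← div_eq_mul_inv] at h
    rw [h.fderiv]
    simp
  have hradial' : fderiv ℝ (fun y => ⟪y, gradient u y⟫) x (gradient u x) =
      ‖gradient u x‖ ^ 2 + ⟪x, fderiv ℝ (gradient u) x (gradient u x)⟫ := by
    rw [fderiv_inner_apply ℝ differentiableAt_fun_id hg]
    simp [add_comm]
  unfold pohozaevField
  rw [divergence_sub (hnorm.fun_smul differentiableAt_fun_id) (hradial.fun_smul hg),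
    divergence_smul hnorm differentiableAt_fun_id, divergence_smul hradial hg, divergence_id,
    divergence_gradient hu.differentiableAt_fderiv, hnorm', hradial', inner_fderiv_gradient_comm hu]
  ring

end Pohozaev

theorem stmt_4_general {n : ℕ} (U : Set (EuclideanSpace ℝ (Fin n))) (hU : IsOpen U)
    (Φ : EuclideanSpace ℝ (Fin n) → ℝ) (hΦ : ContDiffOn ℝ 1 Φ U)
    (u : EuclideanSpace ℝ (Fin n) → ℝ) (hu : ContDiffOn ℝ 2 u U)
    (F : EuclideanSpace ℝ (Fin n) → EuclideanSpace ℝ (Fin n))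
    (hF : ∀ x, F x = Real.exp (((n : ℝ) - 2) * Φ x) •
        ((‖gradient u x‖ ^ 2 / 2) • x - ⟪x, gradient u x⟫ • gradient u x)) :
    ∀ x ∈ U, divergence F x = Real.exp (((n : ℝ) - 2) * Φ x) *
      (((n : ℝ) - 2) / 2 * (1 + ⟪x, gradient Φ x⟫) * ‖gradient u x‖ ^ 2
        - ⟪x, gradient u x⟫ * (lap u x + ((n : ℝ) - 2) * ⟪gradient Φ x, gradient u x⟫)) := by
  intro x hx
  have hux : ContDiffAt ℝ 2 u x := hu.contDiffAt (hU.mem_nhds hx)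
  have hΦx : DifferentiableAt ℝ Φ x :=
    (hΦ.contDiffAt (hU.mem_nhds hx)).differentiableAt one_ne_zero
  have hF' : F = fun y => Real.exp (((n : ℝ) - 2) * Φ y) • pohozaevField u y := funext hF
  rw [hF', divergence_smul (hΦx.const_mul _).exp
      (differentiableAt_pohozaevField hux.differentiableAt_fderiv),
    divergence_pohozaevField hux, fderiv_exp (hΦx.const_mul _), fderiv_const_mul hΦx]
  simp only [FunLike.coe_smul, Pi.smul_apply, ← inner_gradient_left, pohozaevField,
    inner_sub_right, inner_smul_right, smul_eq_mul]
  rw [real_inner_comm (gradient Φ x) x]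
  ring

/-- Pohožaev-type divergence identity in rotationally symmetric spaces,
written in conformal coordinates with an arbitrary `C¹` weight `Φ`. -/
theorem stmt_4 {n : ℕ} (hn : 2 ≤ n) (U : Set (EuclideanSpace ℝ (Fin n))) (hU : IsOpen U)
    (Φ : EuclideanSpace ℝ (Fin n) → ℝ) (hΦ : ContDiffOn ℝ 1 Φ U)
    (u : EuclideanSpace ℝ (Fin n) → ℝ) (hu : ContDiffOn ℝ 2 u U)
    (F : EuclideanSpace ℝ (Fin n) → EuclideanSpace ℝ (Fin n))
    (hF : ∀ x, F x = Real.exp (((n : ℝ) - 2) * Φ x) •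
        ((‖gradient u x‖ ^ 2 / 2) • x - ⟪x, gradient u x⟫ • gradient u x)) :
    ∀ x ∈ U, divergence F x = Real.exp (((n : ℝ) - 2) * Φ x) *
      (((n : ℝ) - 2) / 2 * (1 + ⟪x, gradient Φ x⟫) * ‖gradient u x‖ ^ 2
        - ⟪x, gradient u x⟫ * (lap u x + ((n : ℝ) - 2) * ⟪gradient Φ x, gradient u x⟫)) :=
  stmt_4_general U hU Φ hΦ u hu F hF
end

section
/- Let n ≥ 2, let U be an open subset of E = EuclideanSpace ℝ (Fin n), let Φ : U → ℝ be smooth, and let Ω be a nonempty bounded connected open set with closure(Ω) ⊂ U. Let u : U → ℝ be C² and c > 0 with: Δu(x) + (n−2)⟨∇Φ(x),∇u(x)⟩ = n·(1 + ⟨x,∇Φ(x)⟩)·exp(2Φ(x)) for all x ∈ Ω; u = 0 on frontier(Ω); and exp(−Φ(x))·‖∇u(x)‖ = c for all x ∈ frontier(Ω). Then ∫_Ω (−u(x))·‖∇u(x)‖²·exp((n−2)Φ(x)) dx = ∫_Ω (−u(x))·⟨x,∇u(x)⟩·exp(nΦ(x)) dx. -/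
open MeasureTheory Metric Set RealInnerProductSpace

open InnerProductSpace

section AuxStmt8

variable {n : ℕ}

lemma inner_single_one (a : EuclideanSpace ℝ (Fin n)) (i : Fin n) :
    ⟪a, EuclideanSpace.single i 1⟫ = a i := by
  simp [EuclideanSpace.inner_single_right]

lemma sum_inner_single (a b : EuclideanSpace ℝ (Fin n)) :
    ∑ i, ⟪a, EuclideanSpace.single i 1⟫ * ⟪b, EuclideanSpace.single i 1⟫ = ⟪a, b⟫ := by
  simp only [inner_single_one]
  rw [PiLp.inner_apply]
  simp [mul_comm]

lemma sum_inner_single_self : ∑ i : Fin n, (⟪(EuclideanSpace.single i 1 : EuclideanSpace ℝ (Fin n)),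
    EuclideanSpace.single i 1⟫ : ℝ) = n := by
  simp [inner_single_one, EuclideanSpace.single_apply]

lemma inner_gradient_apply (f : EuclideanSpace ℝ (Fin n) → ℝ) (x v : EuclideanSpace ℝ (Fin n)) :
    ⟪gradient f x, v⟫ = fderiv ℝ f x v := by
  simp [gradient, toDual_symm_apply]

lemma contDiffOn_gradient {U : Set (EuclideanSpace ℝ (Fin n))} (hU : IsOpen U)
    {u : EuclideanSpace ℝ (Fin n) → ℝ} (hu : ContDiffOn ℝ 2 u U) :
    ContDiffOn ℝ 1 (gradient u) U := by
  have h1 : ContDiffOn ℝ 1 (fderiv ℝ u) U := hu.fderiv_of_isOpen hU (by norm_num)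
  exact ((toDual ℝ (EuclideanSpace ℝ (Fin n))).symm.toContinuousLinearEquiv.contDiff).comp_contDiffOn h1

lemma hasFDerivAt_of_contDiffOn {U : Set (EuclideanSpace ℝ (Fin n))} (hU : IsOpen U)
    {f : EuclideanSpace ℝ (Fin n) → ℝ} {k : WithTop ℕ∞} (hk : 1 ≤ k) (hf : ContDiffOn ℝ k f U)
    {x : EuclideanSpace ℝ (Fin n)} (hx : x ∈ U) : HasFDerivAt f (fderiv ℝ f x) x :=
  ((hf.differentiableOn (zero_lt_one.trans_le hk).ne').differentiableAt (hU.mem_nhds hx)).hasFDerivAt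

lemma hasFDerivAt_gradient {U : Set (EuclideanSpace ℝ (Fin n))} (hU : IsOpen U)
    {u : EuclideanSpace ℝ (Fin n) → ℝ} (hu : ContDiffOn ℝ 2 u U)
    {x : EuclideanSpace ℝ (Fin n)} (hx : x ∈ U) :
    HasFDerivAt (gradient u) (fderiv ℝ (gradient u) x) x :=
  ((((contDiffOn_gradient hU hu)).differentiableOn one_ne_zero).differentiableAt
    (hU.mem_nhds hx)).hasFDerivAt

lemma hess_eq {U : Set (EuclideanSpace ℝ (Fin n))} (hU : IsOpen U)
    {u : EuclideanSpace ℝ (Fin n) → ℝ} (hu : ContDiffOn ℝ 2 u U)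
    {x : EuclideanSpace ℝ (Fin n)} (hx : x ∈ U) (v : EuclideanSpace ℝ (Fin n)) :
    hess u x v v = ⟪fderiv ℝ (gradient u) x v, v⟫ := by
  have hfun : (fun y => fderiv ℝ u y v) = fun y => ⟪v, gradient u y⟫ := by
    funext y
    rw [real_inner_comm, inner_gradient_apply]
  have hG := hasFDerivAt_gradient hU hu hx
  have h2 : HasFDerivAt (fun y => ⟪v, gradient u y⟫)
      ((innerSL ℝ v).comp (fderiv ℝ (gradient u) x)) x :=
    (innerSL ℝ v).hasFDerivAt.comp x hG
  rw [hess, hfun, h2.fderiv]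
  simp [real_inner_comm, mul_comm]

lemma lap_eq {U : Set (EuclideanSpace ℝ (Fin n))} (hU : IsOpen U)
    {u : EuclideanSpace ℝ (Fin n) → ℝ} (hu : ContDiffOn ℝ 2 u U)
    {x : EuclideanSpace ℝ (Fin n)} (hx : x ∈ U) :
    lap u x = ∑ i, ⟪fderiv ℝ (gradient u) x (EuclideanSpace.single i 1),
      EuclideanSpace.single i 1⟫ := by
  unfold lap
  exact Finset.sum_congr rfl fun i _ => hess_eq hU hu hx _

noncomputable def Vf (Φ u : EuclideanSpace ℝ (Fin n) → ℝ) (y : EuclideanSpace ℝ (Fin n)) :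
    EuclideanSpace ℝ (Fin n) :=
  Real.exp (((n:ℝ)-2) * Φ y) • gradient u y - Real.exp ((n:ℝ) * Φ y) • y

noncomputable def Wf (Φ u : EuclideanSpace ℝ (Fin n) → ℝ) (y : EuclideanSpace ℝ (Fin n)) :
    EuclideanSpace ℝ (Fin n) :=
  (1/2 * (u y * u y)) • Vf Φ u y

noncomputable def DVf (Φ u : EuclideanSpace ℝ (Fin n) → ℝ) (x : EuclideanSpace ℝ (Fin n)) :
    EuclideanSpace ℝ (Fin n) →L[ℝ] EuclideanSpace ℝ (Fin n) :=
  (Real.exp (((n:ℝ)-2) * Φ x) • fderiv ℝ (gradient u) x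
      + (Real.exp (((n:ℝ)-2) * Φ x) • (((n:ℝ)-2) • fderiv ℝ Φ x)).smulRight (gradient u x))
    - (Real.exp ((n:ℝ) * Φ x) • ContinuousLinearMap.id ℝ (EuclideanSpace ℝ (Fin n))
      + (Real.exp ((n:ℝ) * Φ x) • ((n:ℝ) • fderiv ℝ Φ x)).smulRight x)

noncomputable def DWf (Φ u : EuclideanSpace ℝ (Fin n) → ℝ) (x : EuclideanSpace ℝ (Fin n)) :
    EuclideanSpace ℝ (Fin n) →L[ℝ] EuclideanSpace ℝ (Fin n) :=
  (1/2 * (u x * u x)) • DVf Φ u x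
    + ((1/2:ℝ) • (u x • fderiv ℝ u x + u x • fderiv ℝ u x)).smulRight (Vf Φ u x)

lemma hasFDerivAt_Wf {U : Set (EuclideanSpace ℝ (Fin n))} (hU : IsOpen U)
    {Φ u : EuclideanSpace ℝ (Fin n) → ℝ} (hΦ : ContDiffOn ℝ (⊤ : ℕ∞) Φ U)
    (hu : ContDiffOn ℝ 2 u U) {x : EuclideanSpace ℝ (Fin n)} (hx : x ∈ U) :
    HasFDerivAt (Wf Φ u) (DWf Φ u x) x := by
  have hΦx : HasFDerivAt Φ (fderiv ℝ Φ x) x :=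
    hasFDerivAt_of_contDiffOn hU (by simp) hΦ hx
  have hux : HasFDerivAt u (fderiv ℝ u x) x :=
    hasFDerivAt_of_contDiffOn hU (by norm_num) hu hx
  have hGx := hasFDerivAt_gradient hU hu hx
  have hα : HasFDerivAt (fun y => Real.exp (((n:ℝ)-2) * Φ y))
      (Real.exp (((n:ℝ)-2) * Φ x) • (((n:ℝ)-2) • fderiv ℝ Φ x)) x :=
    (hΦx.const_mul (((n:ℝ)-2))).exp
  have hβ : HasFDerivAt (fun y => Real.exp ((n:ℝ) * Φ y))
      (Real.exp ((n:ℝ) * Φ x) • ((n:ℝ) • fderiv ℝ Φ x)) x :=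
    (hΦx.const_mul ((n:ℝ))).exp
  have hV : HasFDerivAt (Vf Φ u) (DVf Φ u x) x :=
    (hα.smul hGx).sub (hβ.smul (hasFDerivAt_id x))
  have hg : HasFDerivAt (fun y => 1/2 * (u y * u y))
      ((1/2:ℝ) • (u x • fderiv ℝ u x + u x • fderiv ℝ u x)) x :=
    (hux.mul hux).const_mul (1/2)
  exact hg.smul hV

lemma sum_div_DWf {U : Set (EuclideanSpace ℝ (Fin n))} (hU : IsOpen U)
    {Φ u : EuclideanSpace ℝ (Fin n) → ℝ} (hu : ContDiffOn ℝ 2 u U)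
    {x : EuclideanSpace ℝ (Fin n)} (hx : x ∈ U) :
    ∑ i, ⟪DWf Φ u x (EuclideanSpace.single i 1), EuclideanSpace.single i 1⟫
      = 1/2*(u x * u x) * (Real.exp (((n:ℝ)-2) * Φ x)
            * (lap u x + ((n:ℝ)-2) * ⟪gradient Φ x, gradient u x⟫)
          - Real.exp ((n:ℝ) * Φ x) * ((n:ℝ) * (1 + ⟪x, gradient Φ x⟫)))
        + u x * (Real.exp (((n:ℝ)-2) * Φ x) * ‖gradient u x‖^2
          - Real.exp ((n:ℝ) * Φ x) * ⟪x, gradient u x⟫) := by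
  have expand : ∀ i : Fin n, ⟪DWf Φ u x (EuclideanSpace.single i 1), EuclideanSpace.single i 1⟫
      = 1/2*(u x * u x) * Real.exp (((n:ℝ)-2) * Φ x)
          * ⟪fderiv ℝ (gradient u) x (EuclideanSpace.single i 1), EuclideanSpace.single i 1⟫
        + 1/2*(u x * u x) * (Real.exp (((n:ℝ)-2) * Φ x) * (((n:ℝ)-2)))
          * (⟪gradient Φ x, EuclideanSpace.single i 1⟫ * ⟪gradient u x, EuclideanSpace.single i 1⟫)
        - 1/2*(u x * u x) * Real.exp ((n:ℝ) * Φ x)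
          * ⟪(EuclideanSpace.single i 1 : EuclideanSpace ℝ (Fin n)), EuclideanSpace.single i 1⟫
        - 1/2*(u x * u x) * (Real.exp ((n:ℝ) * Φ x) * (n:ℝ))
          * (⟪gradient Φ x, EuclideanSpace.single i 1⟫ * ⟪x, EuclideanSpace.single i 1⟫)
        + u x * (⟪gradient u x, EuclideanSpace.single i 1⟫
            * ⟪Vf Φ u x, EuclideanSpace.single i 1⟫) := by
    intro i
    have hdu : ∀ v, fderiv ℝ u x v = ⟪gradient u x, v⟫ := fun v =>
      (inner_gradient_apply u x v).symm
    have hdΦ : ∀ v, fderiv ℝ Φ x v = ⟪gradient Φ x, v⟫ := fun v =>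
      (inner_gradient_apply Φ x v).symm
    simp only [DWf, DVf, ContinuousLinearMap.add_apply, ContinuousLinearMap.sub_apply,
      ContinuousLinearMap.coe_smul', Pi.smul_apply, ContinuousLinearMap.smulRight_apply,
      ContinuousLinearMap.coe_id', id_eq, smul_eq_mul, inner_add_left, inner_sub_left,
      real_inner_smul_left, hdu, hdΦ]
    ring
  rw [Finset.sum_congr rfl fun i _ => expand i]
  simp only [Finset.sum_add_distrib, Finset.sum_sub_distrib, ← Finset.mul_sum]
  rw [sum_inner_single, sum_inner_single, sum_inner_single, sum_inner_single_self,
    ← lap_eq hU hu hx]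
  have hGV : ⟪gradient u x, Vf Φ u x⟫
      = Real.exp (((n:ℝ)-2) * Φ x) * ‖gradient u x‖^2
        - Real.exp ((n:ℝ) * Φ x) * ⟪x, gradient u x⟫ := by
    rw [Vf, inner_sub_right, real_inner_smul_right, real_inner_smul_right,
      real_inner_self_eq_norm_sq, real_inner_comm]
  rw [hGV]
  rw [real_inner_comm (gradient Φ x) x]
  ring

lemma continuousOn_Vf {U : Set (EuclideanSpace ℝ (Fin n))} (hU : IsOpen U)
    {Φ u : EuclideanSpace ℝ (Fin n) → ℝ} (hΦ : ContDiffOn ℝ (⊤ : ℕ∞) Φ U)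
    (hu : ContDiffOn ℝ 2 u U) : ContinuousOn (Vf Φ u) U := by
  have hG : ContinuousOn (gradient u) U := (contDiffOn_gradient hU hu).continuousOn
  have hΦc : ContinuousOn Φ U := hΦ.continuousOn
  have h1 : ContinuousOn (fun y => Real.exp (((n:ℝ)-2) * Φ y)) U :=
    Real.continuous_exp.comp_continuousOn (continuousOn_const.mul hΦc)
  have h2 : ContinuousOn (fun y => Real.exp ((n:ℝ) * Φ y)) U :=
    Real.continuous_exp.comp_continuousOn (continuousOn_const.mul hΦc)
  have hid : ContinuousOn (fun y : EuclideanSpace ℝ (Fin n) => y) U := continuousOn_id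
  exact (h1.smul hG).sub (h2.smul hid)

lemma hasFDerivAt_indicator_frontier {U : Set (EuclideanSpace ℝ (Fin n))} (hU : IsOpen U)
    {Φ u : EuclideanSpace ℝ (Fin n) → ℝ} (hΦ : ContDiffOn ℝ (⊤ : ℕ∞) Φ U)
    (hu : ContDiffOn ℝ 2 u U) {Ω : Set (EuclideanSpace ℝ (Fin n))} (hop : IsOpen Ω)
    (hcl : closure Ω ⊆ U) {z : EuclideanSpace ℝ (Fin n)} (hz : z ∈ frontier Ω)
    (hz0 : u z = 0) : HasFDerivAt (Ω.indicator (Wf Φ u))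
      (0 : EuclideanSpace ℝ (Fin n) →L[ℝ] EuclideanSpace ℝ (Fin n)) z := by
  have hzΩ : z ∉ Ω := fun h => (hop.frontier_eq ▸ hz).2 h
  have hzU : z ∈ U := hcl (frontier_subset_closure hz)
  have hdu : HasFDerivAt u (fderiv ℝ u z) z :=
    hasFDerivAt_of_contDiffOn hU (by norm_num) hu hzU
  have hbig : (fun y => u y) =O[nhds z] fun y => y - z := by
    have := hdu.isBigO_sub
    simpa [hz0] using this
  obtain ⟨C, hC⟩ := Asymptotics.isBigO_iff.1 hbig
  have hVc : ContinuousAt (Vf Φ u) z :=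
    (continuousOn_Vf hU hΦ hu).continuousAt (hU.mem_nhds hzU)
  have hVb : ∀ᶠ y in nhds z, ‖Vf Φ u y‖ ≤ ‖Vf Φ u z‖ + 1 := by
    have := hVc.norm.eventually_le_const (by linarith : ‖Vf Φ u z‖ < ‖Vf Φ u z‖ + 1)
    exact this
  set M := ‖Vf Φ u z‖ + 1 with hM
  have hM0 : 0 ≤ M := by positivity
  have h1 : (Ω.indicator (Wf Φ u)) =O[nhds z] (fun y => ‖y - z‖ * ‖y - z‖) := by
    rw [Asymptotics.isBigO_iff]
    refine ⟨1/2 * C * C * M, ?_⟩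
    filter_upwards [hC, hVb] with y h1 h2
    have hn1 : ‖(Ω.indicator (Wf Φ u)) y‖ ≤ ‖Wf Φ u y‖ := norm_indicator_le_norm_self _ _
    have hn2 : ‖Wf Φ u y‖ = |1/2 * (u y * u y)| * ‖Vf Φ u y‖ := norm_smul _ _
    have hu2 : |u y| ≤ C * ‖y - z‖ := by simpa [Real.norm_eq_abs] using h1
    have habs : |1/2 * (u y * u y)| = 1/2 * (|u y| * |u y|) := by
      rw [abs_mul, abs_mul]
      norm_num
    rw [Real.norm_eq_abs (‖y - z‖ * ‖y - z‖), abs_of_nonneg (by positivity)]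
    calc ‖(Ω.indicator (Wf Φ u)) y‖ ≤ |1/2 * (u y * u y)| * ‖Vf Φ u y‖ := hn2 ▸ hn1
      _ ≤ (1/2 * (|u y| * |u y|)) * M := by
          rw [habs]
          apply mul_le_mul_of_nonneg_left h2 (by positivity) |>.trans
          exact le_of_eq rfl
      _ ≤ (1/2 * ((C * ‖y - z‖) * (C * ‖y - z‖))) * M := by
          have h0 : (0:ℝ) ≤ |u y| := abs_nonneg _
          have hsq : |u y| * |u y| ≤ (C * ‖y - z‖) * (C * ‖y - z‖) :=
            mul_le_mul hu2 hu2 h0 (le_trans h0 hu2)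
          nlinarith
      _ = 1/2 * C * C * M * (‖y - z‖ * ‖y - z‖) := by ring
  have h2 : (fun y => ‖y - z‖ * ‖y - z‖) =o[nhds z]
      (fun y : EuclideanSpace ℝ (Fin n) => y - z) := by
    rw [Asymptotics.isLittleO_iff]
    intro c hc
    have hev : ∀ᶠ y in nhds z, ‖y - z‖ ≤ c := by
      filter_upwards [Metric.closedBall_mem_nhds z hc] with y hy
      rwa [Metric.mem_closedBall, dist_eq_norm] at hy
    filter_upwards [hev] with y hy
    rw [Real.norm_eq_abs, abs_of_nonneg (by positivity)]
    exact mul_le_mul_of_nonneg_right hy (norm_nonneg _)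
  have h3 := h1.trans_isLittleO h2
  have h4 : HasFDerivAt (Ω.indicator (Wf Φ u))
      (0 : EuclideanSpace ℝ (Fin n) →L[ℝ] EuclideanSpace ℝ (Fin n)) z :=
    hasFDerivAt_iff_isLittleO.2 (by
      simpa [Set.indicator_of_notMem hzΩ] using h3)
  exact h4

noncomputable def Df (Φ u : EuclideanSpace ℝ (Fin n) → ℝ) (Ω : Set (EuclideanSpace ℝ (Fin n)))
    (x : EuclideanSpace ℝ (Fin n)) : EuclideanSpace ℝ (Fin n) →L[ℝ] EuclideanSpace ℝ (Fin n) :=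
  open Classical in if x ∈ Ω then DWf Φ u x else 0

lemma hasFDerivAt_indicator {U : Set (EuclideanSpace ℝ (Fin n))} (hU : IsOpen U)
    {Φ u : EuclideanSpace ℝ (Fin n) → ℝ} (hΦ : ContDiffOn ℝ (⊤ : ℕ∞) Φ U)
    (hu : ContDiffOn ℝ 2 u U) {Ω : Set (EuclideanSpace ℝ (Fin n))} (hop : IsOpen Ω)
    (hcl : closure Ω ⊆ U) (hdir : ∀ x ∈ frontier Ω, u x = 0)
    (x : EuclideanSpace ℝ (Fin n)) :
    HasFDerivAt (Ω.indicator (Wf Φ u)) (Df Φ u Ω x) x := by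
  by_cases hx : x ∈ Ω
  · rw [show Df Φ u Ω x = DWf Φ u x from by rw [Df]; exact if_pos hx]
    have h1 : HasFDerivAt (Wf Φ u) (DWf Φ u x) x :=
      hasFDerivAt_Wf hU hΦ hu (hcl (subset_closure hx))
    have heq : Ω.indicator (Wf Φ u) =ᶠ[nhds x] Wf Φ u :=
      Filter.eventuallyEq_of_mem (hop.mem_nhds hx) fun y hy => Set.indicator_of_mem hy _
    exact h1.congr_of_eventuallyEq heq
  · rw [show Df Φ u Ω x = 0 from by rw [Df]; exact if_neg hx]
    by_cases hxc : x ∈ closure Ω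
    · have hfr : x ∈ frontier Ω := by rw [hop.frontier_eq]; exact ⟨hxc, hx⟩
      exact hasFDerivAt_indicator_frontier hU hΦ hu hop hcl hfr (hdir x hfr)
    · have heq : Ω.indicator (Wf Φ u) =ᶠ[nhds x]
          (fun _ => (0 : EuclideanSpace ℝ (Fin n))) :=
        Filter.eventuallyEq_of_mem (isClosed_closure.isOpen_compl.mem_nhds hxc)
          fun y hy => Set.indicator_of_notMem (fun h => hy (subset_closure h)) _
      exact (hasFDerivAt_const (0 : EuclideanSpace ℝ (Fin n)) x).congr_of_eventuallyEq heq

noncomputable def coreF (Φ u : EuclideanSpace ℝ (Fin n) → ℝ)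
    (x : EuclideanSpace ℝ (Fin n)) : ℝ :=
  u x * (Real.exp (((n:ℝ)-2) * Φ x) * ‖gradient u x‖^2
    - Real.exp ((n:ℝ) * Φ x) * ⟪x, gradient u x⟫)

lemma sum_div_Df {U : Set (EuclideanSpace ℝ (Fin n))} (hU : IsOpen U)
    {Φ u : EuclideanSpace ℝ (Fin n) → ℝ} (hu : ContDiffOn ℝ 2 u U)
    {Ω : Set (EuclideanSpace ℝ (Fin n))} (hcl : closure Ω ⊆ U)
    (hpde : ∀ x ∈ Ω, lap u x + ((n : ℝ) - 2) * ⟪gradient Φ x, gradient u x⟫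
      = (n : ℝ) * (1 + ⟪x, gradient Φ x⟫) * Real.exp (2 * Φ x))
    (x : EuclideanSpace ℝ (Fin n)) :
    ∑ i, ⟪Df Φ u Ω x (EuclideanSpace.single i 1), EuclideanSpace.single i 1⟫
      = Ω.indicator (coreF Φ u) x := by
  by_cases hx : x ∈ Ω
  · rw [show Df Φ u Ω x = DWf Φ u x from by rw [Df]; exact if_pos hx,
      Set.indicator_of_mem hx, sum_div_DWf hU hu (hcl (subset_closure hx)), hpde x hx]
    have hAB : Real.exp (((n:ℝ)-2) * Φ x) * Real.exp (2 * Φ x) = Real.exp ((n:ℝ) * Φ x) := by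
      rw [← Real.exp_add]; ring_nf
    rw [coreF]
    linear_combination (1/2 * (u x * u x) * ((n:ℝ) * (1 + ⟪x, gradient Φ x⟫))) * hAB
  · rw [show Df Φ u Ω x = 0 from by rw [Df]; exact if_neg hx,
      Set.indicator_of_notMem hx]
    simp

lemma continuousOn_coreF {U : Set (EuclideanSpace ℝ (Fin n))} (hU : IsOpen U)
    {Φ u : EuclideanSpace ℝ (Fin n) → ℝ} (hΦ : ContDiffOn ℝ (⊤ : ℕ∞) Φ U)
    (hu : ContDiffOn ℝ 2 u U) : ContinuousOn (coreF Φ u) U := by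
  have hG : ContinuousOn (gradient u) U := (contDiffOn_gradient hU hu).continuousOn
  have hΦc : ContinuousOn Φ U := hΦ.continuousOn
  have huc : ContinuousOn u U := hu.continuousOn
  have h1 : ContinuousOn (fun y => Real.exp (((n:ℝ)-2) * Φ y)) U :=
    Real.continuous_exp.comp_continuousOn (continuousOn_const.mul hΦc)
  have h2 : ContinuousOn (fun y => Real.exp ((n:ℝ) * Φ y)) U :=
    Real.continuous_exp.comp_continuousOn (continuousOn_const.mul hΦc)
  have h3 : ContinuousOn (fun y => ‖gradient u y‖^2) U := (hG.norm.pow 2)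
  have hid : ContinuousOn (fun y : EuclideanSpace ℝ (Fin n) => y) U := continuousOn_id
  have h4 : ContinuousOn (fun y => (⟪y, gradient u y⟫ : ℝ)) U := hid.inner hG
  exact huc.mul ((h1.mul h3).sub (h2.mul h4))

lemma integrable_indicator_coreF {U : Set (EuclideanSpace ℝ (Fin n))} (hU : IsOpen U)
    {Φ u : EuclideanSpace ℝ (Fin n) → ℝ} (hΦ : ContDiffOn ℝ (⊤ : ℕ∞) Φ U)
    (hu : ContDiffOn ℝ 2 u U) {Ω : Set (EuclideanSpace ℝ (Fin n))} (hop : IsOpen Ω)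
    (hbd : Bornology.IsBounded Ω) (hcl : closure Ω ⊆ U) :
    Integrable (Ω.indicator (coreF Φ u)) := by
  rw [integrable_indicator_iff hop.measurableSet]
  have h1 : IntegrableOn (coreF Φ u) (closure Ω) :=
    ((continuousOn_coreF hU hΦ hu).mono hcl).integrableOn_compact hbd.isCompact_closure
  exact h1.mono_set subset_closure

lemma abs_coord_le_norm (x : EuclideanSpace ℝ (Fin n)) (i : Fin n) : |x i| ≤ ‖x‖ := by
  rw [EuclideanSpace.norm_eq]
  have h1 : |x i| = Real.sqrt (x i ^ 2) := by
    rw [Real.sqrt_sq_eq_abs]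
  rw [h1]
  apply Real.sqrt_le_sqrt
  calc x i ^ 2 = ‖x i‖ ^ 2 := by rw [Real.norm_eq_abs, sq_abs]
    _ ≤ ∑ j, ‖x j‖ ^ 2 :=
      Finset.single_le_sum (f := fun j => ‖x j‖ ^ 2) (fun j _ => sq_nonneg _) (Finset.mem_univ i)

lemma integral_core_zero {m : ℕ} {U : Set (EuclideanSpace ℝ (Fin (m+1)))} (hU : IsOpen U)
    {Φ u : EuclideanSpace ℝ (Fin (m+1)) → ℝ} (hΦ : ContDiffOn ℝ (⊤ : ℕ∞) Φ U)
    (hu : ContDiffOn ℝ 2 u U) {Ω : Set (EuclideanSpace ℝ (Fin (m+1)))} (hop : IsOpen Ω)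
    (hbd : Bornology.IsBounded Ω) (hcl : closure Ω ⊆ U)
    (hdir : ∀ x ∈ frontier Ω, u x = 0)
    (hpde : ∀ x ∈ Ω, lap u x + ((m+1 : ℝ) - 2) * ⟪gradient Φ x, gradient u x⟫
      = (m+1 : ℝ) * (1 + ⟪x, gradient Φ x⟫) * Real.exp (2 * Φ x)) :
    ∫ x in Ω, coreF Φ u x = 0 := by
  classical
  obtain ⟨R, hR0, hRs⟩ := hbd.subset_closedBall_lt 0 0
  set a : Fin (m+1) → ℝ := fun _ => -(R+1) with ha
  set b : Fin (m+1) → ℝ := fun _ => R+1 with hb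
  have hle : a ≤ b := fun i => by simp [ha, hb]; linarith
  set ψ : (Fin (m+1) → ℝ) ≃L[ℝ] EuclideanSpace ℝ (Fin (m+1)) :=
    (EuclideanSpace.equiv (Fin (m+1)) ℝ).symm with hψ
  set Wt : EuclideanSpace ℝ (Fin (m+1)) → EuclideanSpace ℝ (Fin (m+1)) :=
    Ω.indicator (Wf Φ u) with hWt
  have hpde' : ∀ x ∈ Ω, lap u x + (((m+1:ℕ) : ℝ) - 2) * ⟪gradient Φ x, gradient u x⟫
      = ((m+1:ℕ) : ℝ) * (1 + ⟪x, gradient Φ x⟫) * Real.exp (2 * Φ x) := by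
    intro x hx; have := hpde x hx; push_cast; push_cast at this; linarith
  have hD : ∀ x, HasFDerivAt Wt (Df Φ u Ω x) x :=
    hasFDerivAt_indicator hU hΦ hu hop hcl hdir
  have hWtc : Continuous Wt := continuous_iff_continuousAt.2 fun x => (hD x).continuousAt
  set f : Fin (m+1) → (Fin (m+1) → ℝ) → ℝ :=
    fun i y => ⟪EuclideanSpace.single i 1, Wt (ψ y)⟫ with hf
  set f' : Fin (m+1) → (Fin (m+1) → ℝ) → (Fin (m+1) → ℝ) →L[ℝ] ℝ :=
    fun i y => ((innerSL ℝ (EuclideanSpace.single i 1)).comp (Df Φ u Ω (ψ y))).comp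
      (ψ : (Fin (m+1) → ℝ) →L[ℝ] EuclideanSpace ℝ (Fin (m+1))) with hf'
  have Hc : ∀ i, ContinuousOn (f i) (Icc a b) := by
    intro i
    exact (Continuous.inner continuous_const (hWtc.comp ψ.continuous)).continuousOn
  have Hd : ∀ y ∈ (Set.pi univ fun i => Ioo (a i) (b i)) \ (∅ : Set (Fin (m+1) → ℝ)),
      ∀ i, HasFDerivAt (f i) (f' i y) y := by
    intro y _ i
    have hψd : HasFDerivAt (fun z : Fin (m+1) → ℝ => ψ z)
        (ψ : (Fin (m+1) → ℝ) →L[ℝ] EuclideanSpace ℝ (Fin (m+1))) y := ψ.hasFDerivAt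
    have h1 : HasFDerivAt (fun z : Fin (m+1) → ℝ => Wt (ψ z))
        ((Df Φ u Ω (ψ y)).comp (ψ : (Fin (m+1) → ℝ) →L[ℝ] EuclideanSpace ℝ (Fin (m+1)))) y :=
      (hD (ψ y)).comp y hψd
    have h2 := ((innerSL ℝ (EuclideanSpace.single i 1)).hasFDerivAt).comp y h1
    rw [hf']
    exact h2
  have hψsingle : ∀ i : Fin (m+1),
      (ψ : (Fin (m+1) → ℝ) →L[ℝ] EuclideanSpace ℝ (Fin (m+1))) (Pi.single i 1)
        = EuclideanSpace.single i 1 := fun i => rfl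
  have hDF : ∀ y, ∑ i, f' i y (Pi.single i 1) = Ω.indicator (coreF Φ u) (ψ y) := by
    intro y
    rw [← sum_div_Df hU hu hcl hpde' (ψ y)]
    refine Finset.sum_congr rfl fun i _ => ?_
    rw [hf']
    simp only [ContinuousLinearMap.comp_apply, ContinuousLinearMap.coe_coe, innerSL_apply_apply]
    rw [hψsingle i, real_inner_comm]
  
  set ν := (MeasurableEquiv.toLp 2 (Fin (m+1) → ℝ)).symm with hν
  have hgi : Integrable (Ω.indicator (coreF Φ u)) :=
    integrable_indicator_coreF hU hΦ hu hop hbd hcl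
  have hcompi : Integrable (fun y => Ω.indicator (coreF Φ u) (ψ y))
      (volume : Measure (Fin (m+1) → ℝ)) := by
    have h := (EuclideanSpace.volume_preserving_symm_measurableEquiv_toLp (Fin (m+1))).symm
    exact (h.integrable_comp_emb (MeasurableEquiv.measurableEmbedding _)).2 hgi
  have Hi : IntegrableOn (fun y => ∑ i, f' i y (Pi.single i 1)) (Icc a b) := by
    rw [show (fun y => ∑ i, f' i y (Pi.single i 1))
        = fun y => Ω.indicator (coreF Φ u) (ψ y) from funext hDF]
    exact hcompi.integrableOn
  have key := MeasureTheory.integral_divergence_of_hasFDerivAt_off_countable' a b hle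
    f f' ∅ Set.countable_empty Hc Hd Hi
  have hface : ∀ (i : Fin (m+1)) (p : Fin m → ℝ) (c : ℝ), |c| = R+1 →
      f i (i.insertNth c p) = 0 := by
    intro i p c hc
    have hnot : ψ (i.insertNth c p) ∉ Ω := by
      intro hmem
      have h1 := hRs hmem
      rw [mem_closedBall, dist_zero_right] at h1
      have h2 : |(ψ (i.insertNth c p) : EuclideanSpace ℝ (Fin (m+1))) i|
          ≤ ‖(ψ (i.insertNth c p) : EuclideanSpace ℝ (Fin (m+1)))‖ := abs_coord_le_norm _ i
      have h3 : (ψ (i.insertNth c p) : EuclideanSpace ℝ (Fin (m+1))) i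
          = (i.insertNth c p : Fin (m+1) → ℝ) i := rfl
      rw [h3, Fin.insertNth_apply_same, hc] at h2
      linarith
    simp [hf, hWt, Set.indicator_of_notMem hnot]
  have hfacesum : ∑ i : Fin (m+1),
      ((∫ x in Icc (a ∘ i.succAbove) (b ∘ i.succAbove), f i (i.insertNth (b i) x))
        - ∫ x in Icc (a ∘ i.succAbove) (b ∘ i.succAbove), f i (i.insertNth (a i) x)) = 0 := by
    refine Finset.sum_eq_zero fun i _ => ?_
    have hRpos : (0:ℝ) < R + 1 := by linarith
    have habsb : |(R+1 : ℝ)| = R + 1 := abs_of_pos hRpos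
    have habsa : |(-(R+1) : ℝ)| = R + 1 := by rw [abs_neg]; exact habsb
    have e1 : ∀ x : Fin m → ℝ, f i (i.insertNth (b i) x) = 0 := fun x =>
      hface i x (b i) habsb
    have e2 : ∀ x : Fin m → ℝ, f i (i.insertNth (a i) x) = 0 := fun x =>
      hface i x (a i) habsa
    simp [e1, e2]
  rw [show (fun y => ∑ i, f' i y (Pi.single i 1))
      = fun y => Ω.indicator (coreF Φ u) (ψ y) from funext hDF] at key
  rw [hfacesum] at key
  have htrans : ∫ y in Icc a b, Ω.indicator (coreF Φ u) (ψ y)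
      = ∫ x in ν ⁻¹' (Icc a b), Ω.indicator (coreF Φ u) x := by
    rw [← MeasurePreserving.setIntegral_preimage_emb
      (EuclideanSpace.volume_preserving_symm_measurableEquiv_toLp (Fin (m+1)))
      (MeasurableEquiv.measurableEmbedding _) (fun y => Ω.indicator (coreF Φ u) (ψ y)) (Icc a b)]
    rfl
  have hsub : Ω ⊆ ν ⁻¹' (Icc a b) := by
    intro x hx
    have h1 := hRs hx
    rw [mem_closedBall, dist_zero_right] at h1
    have h2 : ∀ i, |x i| ≤ R := fun i => (abs_coord_le_norm x i).trans h1
    simp only [Set.mem_preimage, Set.mem_Icc]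
    constructor
    · intro i
      have := abs_le.1 (h2 i)
      show a i ≤ x i
      rw [ha]; dsimp; linarith [this.1]
    · intro i
      have := abs_le.1 (h2 i)
      show x i ≤ b i
      rw [hb]; dsimp; linarith [this.2]
  rw [htrans, setIntegral_indicator hop.measurableSet,
    Set.inter_eq_self_of_subset_right hsub] at key
  exact key


end AuxStmt8

/-- Identity (4.15) of Proposition 4.3, `∫(−u)|Du|²_g = ∫(−u) h u_r`,
in conformal coordinates with an arbitrary smooth weight `Φ`. -/
theorem stmt_8 {n : ℕ} (hn : 2 ≤ n) (U : Set (EuclideanSpace ℝ (Fin n))) (hU : IsOpen U)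
    (Φ : EuclideanSpace ℝ (Fin n) → ℝ) (hΦ : ContDiffOn ℝ (⊤ : ℕ∞) Φ U)
    (Ω : Set (EuclideanSpace ℝ (Fin n))) (hne : Ω.Nonempty)
    (hbd : Bornology.IsBounded Ω) (hconn : IsConnected Ω) (hop : IsOpen Ω)
    (hcl : closure Ω ⊆ U)
    (u : EuclideanSpace ℝ (Fin n) → ℝ) (hu : ContDiffOn ℝ 2 u U) (c : ℝ) (hc : 0 < c)
    (hpde : ∀ x ∈ Ω, lap u x + ((n : ℝ) - 2) * ⟪gradient Φ x, gradient u x⟫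
      = (n : ℝ) * (1 + ⟪x, gradient Φ x⟫) * Real.exp (2 * Φ x))
    (hdir : ∀ x ∈ frontier Ω, u x = 0)
    (hneu : ∀ x ∈ frontier Ω, Real.exp (-Φ x) * ‖gradient u x‖ = c) :
    (∫ x in Ω, (-u x) * ‖gradient u x‖ ^ 2 * Real.exp (((n : ℝ) - 2) * Φ x))
      = ∫ x in Ω, (-u x) * ⟪x, gradient u x⟫ * Real.exp ((n : ℝ) * Φ x) := by
  obtain ⟨m, rfl⟩ : ∃ m, n = m + 1 := ⟨n - 1, by omega⟩
  have hpde'' : ∀ x ∈ Ω, lap u x + ((m+1 : ℝ) - 2) * ⟪gradient Φ x, gradient u x⟫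
      = (m+1 : ℝ) * (1 + ⟪x, gradient Φ x⟫) * Real.exp (2 * Φ x) := by
    intro x hx
    have h := hpde x hx
    push_cast at h ⊢
    linarith
  have hzero := integral_core_zero hU hΦ hu hop hbd hcl hdir hpde''
  -- continuity pieces
  have hG : ContinuousOn (gradient u) U := (contDiffOn_gradient hU hu).continuousOn
  have hΦc : ContinuousOn Φ U := hΦ.continuousOn
  have huc : ContinuousOn u U := hu.continuousOn
  have h1 : ContinuousOn (fun y => Real.exp ((((m+1:ℕ):ℝ)-2) * Φ y)) U :=
    Real.continuous_exp.comp_continuousOn (continuousOn_const.mul hΦc)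
  have h2 : ContinuousOn (fun y => Real.exp (((m+1:ℕ):ℝ) * Φ y)) U :=
    Real.continuous_exp.comp_continuousOn (continuousOn_const.mul hΦc)
  have h3 : ContinuousOn (fun y => ‖gradient u y‖^2) U := (hG.norm.pow 2)
  have hid : ContinuousOn (fun y : EuclideanSpace ℝ (Fin (m+1)) => y) U := continuousOn_id
  have h4 : ContinuousOn (fun y => (⟪y, gradient u y⟫ : ℝ)) U := hid.inner hG
  set P1 : EuclideanSpace ℝ (Fin (m+1)) → ℝ :=
    fun x => u x * (Real.exp ((((m+1:ℕ):ℝ)-2) * Φ x) * ‖gradient u x‖^2) with hP1def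
  set P2 : EuclideanSpace ℝ (Fin (m+1)) → ℝ :=
    fun x => u x * (Real.exp (((m+1:ℕ):ℝ) * Φ x) * ⟪x, gradient u x⟫) with hP2def
  have hP1c : ContinuousOn P1 U := huc.mul (h1.mul h3)
  have hP2c : ContinuousOn P2 U := huc.mul (h2.mul h4)
  have hP1i : IntegrableOn P1 Ω :=
    (((hP1c.mono hcl).integrableOn_compact hbd.isCompact_closure).mono_set subset_closure)
  have hP2i : IntegrableOn P2 Ω :=
    (((hP2c.mono hcl).integrableOn_compact hbd.isCompact_closure).mono_set subset_closure)
  have hsplit : (∫ x in Ω, P1 x) - (∫ x in Ω, P2 x) = 0 := by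
    rw [← integral_sub hP1i hP2i]
    rw [show (fun x => P1 x - P2 x) = coreF Φ u from funext fun x => by
      rw [hP1def, hP2def, coreF]; push_cast; ring]
    exact hzero
  have hL : (∫ x in Ω, (-u x) * ‖gradient u x‖ ^ 2 * Real.exp ((((m+1:ℕ):ℝ) - 2) * Φ x))
      = - ∫ x in Ω, P1 x := by
    rw [← integral_neg]
    congr 1
    funext x
    rw [hP1def]
    ring
  have hR : (∫ x in Ω, (-u x) * ⟪x, gradient u x⟫ * Real.exp (((m+1:ℕ):ℝ) * Φ x))
      = - ∫ x in Ω, P2 x := by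
    rw [← integral_neg]
    congr 1
    funext x
    rw [hP2def]
    ring
  rw [hL, hR]
  linarith
end

section
/- Let n ≥ 2, let U be an open subset of E = EuclideanSpace ℝ (Fin n), let Φ : U → ℝ be smooth, and let Ω be a nonempty bounded connected open set with closure(Ω) ⊂ U. Let u : U → ℝ be C² and c > 0 with: Δu(x) + (n−2)⟨∇Φ(x),∇u(x)⟩ = n·(1 + ⟨x,∇Φ(x)⟩)·exp(2Φ(x)) for all x ∈ Ω; u = 0 on frontier(Ω); exp(−Φ(x))·‖∇u(x)‖ = c for all x ∈ frontier(Ω); and u ≤ 0 on Ω. Then ∫_Ω (−u(x))·( exp(−2Φ(x))·‖∇u(x)‖² − ‖x‖²·exp(2Φ(x)) )·exp(nΦ(x)) dx ≤ 0. -/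
open MeasureTheory Metric Set RealInnerProductSpace

set_option maxHeartbeats 1000000

section aux

lemma coord_abs_le_norm {m : ℕ} (x : EuclideanSpace ℝ (Fin m)) (i : Fin m) : |x i| ≤ ‖x‖ := by
  have h := abs_real_inner_le_norm (EuclideanSpace.single i (1:ℝ)) x
  rw [EuclideanSpace.inner_single_left] at h
  simpa [EuclideanSpace.norm_single] using h

lemma grad_coord {m : ℕ} (f : EuclideanSpace ℝ (Fin m) → ℝ) (x : EuclideanSpace ℝ (Fin m))
    (i : Fin m) : gradient f x i = fderiv ℝ f x (EuclideanSpace.single i 1) := by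
  have h1 : (inner ℝ (EuclideanSpace.single i (1:ℝ)) (gradient f x) : ℝ) = gradient f x i := by
    rw [EuclideanSpace.inner_single_left]; simp
  rw [← h1, real_inner_comm, gradient, InnerProductSpace.toDual_symm_apply]

lemma inner_eq_sum {m : ℕ} (v w : EuclideanSpace ℝ (Fin m)) :
    (inner ℝ v w : ℝ) = ∑ i, v i * w i := by
  rw [PiLp.inner_apply]; simp only [RCLike.inner_apply, conj_trivial, mul_comm]

lemma integral_div_eq_zero {m : ℕ}
    (Z : EuclideanSpace ℝ (Fin (m+1)) → EuclideanSpace ℝ (Fin (m+1)))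
    (Z' : EuclideanSpace ℝ (Fin (m+1)) → EuclideanSpace ℝ (Fin (m+1)) →L[ℝ] EuclideanSpace ℝ (Fin (m+1)))
    (hd : ∀ x, HasFDerivAt Z (Z' x) x) {R : ℝ} (hR : 0 < R)
    (hsupp : ∀ x, R ≤ ‖x‖ → Z x = 0) (hsupp' : ∀ x, R ≤ ‖x‖ → Z' x = 0)
    (hi : Integrable (fun x => ∑ i, (Z' x) (EuclideanSpace.single i 1) i)) :
    (∫ x, ∑ i, (Z' x) (EuclideanSpace.single i 1) i) = 0 := by
  classical
  set eL := EuclideanSpace.equiv (Fin (m+1)) ℝ with heL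
  set e := (MeasurableEquiv.toLp 2 (Fin (m+1) → ℝ)).symm with he
  set F : (Fin (m+1) → ℝ) → (Fin (m+1) → ℝ) := fun x => eL (Z (eL.symm x)) with hF
  set F' : (Fin (m+1) → ℝ) → (Fin (m+1) → ℝ) →L[ℝ] (Fin (m+1) → ℝ) :=
    fun x => (eL : _ →L[ℝ] _).comp ((Z' (eL.symm x)).comp (eL.symm : _ →L[ℝ] _)) with hF'
  have hde : ∀ x, HasFDerivAt F (F' x) x := fun x =>
    eL.hasFDerivAt.comp x ((hd (eL.symm x)).comp x eL.symm.hasFDerivAt)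
  have hdiv : ∀ x, (∑ i, (F' x) (Pi.single i 1) i)
      = ∑ i, (Z' (e.symm x)) (EuclideanSpace.single i 1) i := fun x => rfl
  have hnorm : ∀ x : Fin (m+1) → ℝ, ∀ i, |x i| ≤ ‖(e.symm x : EuclideanSpace ℝ (Fin (m+1)))‖ :=
    fun x i => coord_abs_le_norm (e.symm x) i
  -- box
  set a : Fin (m+1) → ℝ := fun _ => -R with ha
  set b : Fin (m+1) → ℝ := fun _ => R with hb
  have hle : a ≤ b := fun i => by simp [ha, hb]; linarith
  have hout : ∀ x : Fin (m+1) → ℝ, x ∉ Icc a b → R ≤ ‖(e.symm x : EuclideanSpace ℝ (Fin (m+1)))‖ := by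
    intro x hx
    by_contra hlt
    push_neg at hlt
    refine hx ⟨fun i => ?_, fun i => ?_⟩
    · have h2 := (abs_lt.1 ((hnorm x i).trans_lt hlt)).1
      simp only [ha]; linarith
    · have h2 := (abs_lt.1 ((hnorm x i).trans_lt hlt)).2
      simp only [hb]; linarith
  -- transfer the integral
  have hmp : MeasurePreserving (⇑e.symm) volume volume :=
    (EuclideanSpace.volume_preserving_symm_measurableEquiv_toLp (Fin (m+1))).symm
  have htrans : (∫ x, ∑ i, (Z' x) (EuclideanSpace.single i 1) i)
      = ∫ x : Fin (m+1) → ℝ, ∑ i, (F' x) (Pi.single i 1) i := by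
    rw [show (fun x : Fin (m+1) → ℝ => ∑ i, (F' x) (Pi.single i 1) i)
      = (fun y => ∑ i, (Z' y) (EuclideanSpace.single i 1) i) ∘ (⇑e.symm) from funext hdiv]
    exact (hmp.integral_comp e.symm.measurableEmbedding _).symm
  have hiF : Integrable (fun x : Fin (m+1) → ℝ => ∑ i, (F' x) (Pi.single i 1) i) := by
    rw [show (fun x : Fin (m+1) → ℝ => ∑ i, (F' x) (Pi.single i 1) i)
      = (fun y => ∑ i, (Z' y) (EuclideanSpace.single i 1) i) ∘ (⇑e.symm) from funext hdiv]
    exact (hmp.integrable_comp_emb e.symm.measurableEmbedding).2 hi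
  have hcF : Continuous F := by
    exact continuous_iff_continuousAt.2 fun x => (hde x).continuousAt
  have hzero : ∀ x : Fin (m+1) → ℝ, x ∉ Icc a b → (∑ i, (F' x) (Pi.single i 1) i) = 0 := by
    intro x hx
    have h0 : Z' (eL.symm x) = 0 := hsupp' _ (hout x hx)
    refine Finset.sum_eq_zero fun i _ => ?_
    simp only [hF', ContinuousLinearMap.comp_apply, h0, ContinuousLinearMap.zero_apply, map_zero]
    rfl
  have hdivthm := MeasureTheory.integral_divergence_of_hasFDerivAt_off_countable a b hle
    F F' ∅ Set.countable_empty hcF.continuousOn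
    (fun x _ => hde x) hiF.integrableOn
  have hfaces : (∫ x : Fin (m+1) → ℝ in Icc a b, ∑ i, (F' x) (Pi.single i 1) i) = 0 := by
    rw [hdivthm]
    refine Finset.sum_eq_zero fun i _ => ?_
    have hfe : ∀ (t : ℝ), |t| = R → ∀ y : Fin m → ℝ, F (i.insertNth t y) i = 0 := by
      intro t ht y
      have hp : R ≤ ‖(eL.symm (i.insertNth t y) : EuclideanSpace ℝ (Fin (m+1)))‖ := by
        have h1 := coord_abs_le_norm (eL.symm (i.insertNth t y) : EuclideanSpace ℝ (Fin (m+1))) i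
        have h3 : (eL.symm (i.insertNth t y) : EuclideanSpace ℝ (Fin (m+1))) i = t :=
          Fin.insertNth_apply_same (α := fun _ => ℝ) i t y
        rw [h3, ht] at h1
        exact h1
      show (eL (Z (eL.symm (i.insertNth t y)))) i = 0
      rw [hsupp _ hp]
      simp
    rw [setIntegral_congr_fun measurableSet_Icc (fun y _ => hfe (b i) (by simp [hb, abs_of_pos hR]) y),
      setIntegral_congr_fun measurableSet_Icc (fun y _ => hfe (a i) (by simp [ha, abs_of_pos hR]) y)]
    simp
  rw [htrans, ← setIntegral_eq_integral_of_forall_compl_eq_zero hzero, hfaces]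

end aux

/-- Inequality (4.16) of Proposition 4.3, `∫(−u)(|Du|²_g − h²) ≤ 0`,
in conformal coordinates with an arbitrary smooth weight `Φ`. -/
theorem stmt_9 {n : ℕ} (hn : 2 ≤ n) (U : Set (EuclideanSpace ℝ (Fin n))) (hU : IsOpen U)
    (Φ : EuclideanSpace ℝ (Fin n) → ℝ) (hΦ : ContDiffOn ℝ (⊤ : ℕ∞) Φ U)
    (Ω : Set (EuclideanSpace ℝ (Fin n))) (hne : Ω.Nonempty)
    (hbd : Bornology.IsBounded Ω) (hconn : IsConnected Ω) (hop : IsOpen Ω)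
    (hcl : closure Ω ⊆ U)
    (u : EuclideanSpace ℝ (Fin n) → ℝ) (hu : ContDiffOn ℝ 2 u U) (c : ℝ) (hc : 0 < c)
    (hpde : ∀ x ∈ Ω, lap u x + ((n : ℝ) - 2) * ⟪gradient Φ x, gradient u x⟫
      = (n : ℝ) * (1 + ⟪x, gradient Φ x⟫) * Real.exp (2 * Φ x))
    (hdir : ∀ x ∈ frontier Ω, u x = 0)
    (hneu : ∀ x ∈ frontier Ω, Real.exp (-Φ x) * ‖gradient u x‖ = c)
    (hsign : ∀ x ∈ Ω, u x ≤ 0) :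
    (∫ x in Ω, (-u x) *
        (Real.exp (-2 * Φ x) * ‖gradient u x‖ ^ 2 - ‖x‖ ^ 2 * Real.exp (2 * Φ x)) *
        Real.exp ((n : ℝ) * Φ x)) ≤ 0 := by
  classical
  obtain ⟨m, rfl⟩ : ∃ m, n = m + 1 := ⟨n - 1, by omega⟩
  set N : ℝ := ((m + 1 : ℕ) : ℝ) with hN
  -- basic scalar fields
  set a : EuclideanSpace ℝ (Fin (m+1)) → ℝ := fun x => Real.exp ((N - 2) * Φ x) with ha
  set b : EuclideanSpace ℝ (Fin (m+1)) → ℝ := fun x => Real.exp (N * Φ x) with hb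
  set c2 : EuclideanSpace ℝ (Fin (m+1)) → ℝ := fun x => Real.exp ((N + 2) * Φ x) with hc2
  set V : EuclideanSpace ℝ (Fin (m+1)) → EuclideanSpace ℝ (Fin (m+1)) :=
    fun x => a x • gradient u x - b x • x with hV
  set ρ : EuclideanSpace ℝ (Fin (m+1)) → ℝ := fun x => u x * u x * (2⁻¹ : ℝ) with hρ
  set Z : EuclideanSpace ℝ (Fin (m+1)) → EuclideanSpace ℝ (Fin (m+1)) :=
    fun x => ρ x • V x with hZ
  set D : EuclideanSpace ℝ (Fin (m+1)) → ℝ :=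
    fun x => u x * (a x * ‖gradient u x‖ ^ 2 - b x * ⟪gradient u x, x⟫) with hD
  set Q : EuclideanSpace ℝ (Fin (m+1)) → ℝ :=
    fun x => u x * (a x * ‖gradient u x‖ ^ 2 - 2 * (b x * ⟪gradient u x, x⟫)
      + c2 x * ‖x‖ ^ 2) with hQ
  -- differentiability facts
  have hud : ∀ x ∈ U, HasFDerivAt u (fderiv ℝ u x) x := by
    intro x hx
    exact ((hu.differentiableOn two_ne_zero x hx).differentiableAt (hU.mem_nhds hx)).hasFDerivAt
  have hΦd : ∀ x ∈ U, HasFDerivAt Φ (fderiv ℝ Φ x) x := by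
    intro x hx
    exact ((hΦ.differentiableOn (by simp) x hx).differentiableAt (hU.mem_nhds hx)).hasFDerivAt
  have hu1 : ContDiffOn ℝ 1 (fderiv ℝ u) U := hu.fderiv_of_isOpen hU (by norm_num)
  have hfd2 : ∀ x ∈ U, HasFDerivAt (fderiv ℝ u) (fderiv ℝ (fderiv ℝ u) x) x := by
    intro x hx
    exact ((hu1.differentiableOn one_ne_zero x hx).differentiableAt (hU.mem_nhds hx)).hasFDerivAt
  set G' : EuclideanSpace ℝ (Fin (m+1)) →
      (EuclideanSpace ℝ (Fin (m+1)) →L[ℝ] EuclideanSpace ℝ (Fin (m+1))) := fun x =>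
    ((InnerProductSpace.toDual ℝ (EuclideanSpace ℝ (Fin (m+1)))).symm.toContinuousLinearEquiv :
      (EuclideanSpace ℝ (Fin (m+1)) →L[ℝ] ℝ) ≃L[ℝ] EuclideanSpace ℝ (Fin (m+1))).toContinuousLinearMap.comp
      (fderiv ℝ (fderiv ℝ u) x) with hG'
  have hgd : ∀ x ∈ U, HasFDerivAt (gradient u) (G' x) x := by
    intro x hx
    exact ((InnerProductSpace.toDual ℝ (EuclideanSpace ℝ
      (Fin (m+1)))).symm.toContinuousLinearEquiv.hasFDerivAt).comp x (hfd2 x hx)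
  have htrace : ∀ x ∈ U, ∑ i, (G' x (EuclideanSpace.single i 1)) i = lap u x := by
    intro x hx
    refine Finset.sum_congr rfl fun i _ => ?_
    have h1 : (G' x (EuclideanSpace.single i 1)) i
        = fderiv ℝ (fderiv ℝ u) x (EuclideanSpace.single i 1) (EuclideanSpace.single i 1) := by
      have h2 : (inner ℝ (EuclideanSpace.single i (1:ℝ)) (G' x (EuclideanSpace.single i 1)) : ℝ)
          = (G' x (EuclideanSpace.single i 1)) i := by
        rw [EuclideanSpace.inner_single_left]; simp
      rw [← h2, real_inner_comm]
      exact InnerProductSpace.toDual_symm_apply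
    have happ : HasFDerivAt (fun y => fderiv ℝ u y (EuclideanSpace.single i 1))
        ((ContinuousLinearMap.apply ℝ ℝ (EuclideanSpace.single i (1:ℝ))).comp
          (fderiv ℝ (fderiv ℝ u) x)) x :=
      (ContinuousLinearMap.apply ℝ ℝ (EuclideanSpace.single i (1:ℝ))).hasFDerivAt.comp x (hfd2 x hx)
    rw [h1, hess, happ.fderiv]
    rfl
  -- continuity facts
  have hΦc : ContinuousOn Φ U := hΦ.continuousOn
  have huc : ContinuousOn u U := hu.continuousOn
  have hgc : ContinuousOn (gradient u) U := by
    have := hu1.continuousOn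
    exact ((InnerProductSpace.toDual ℝ (EuclideanSpace ℝ
      (Fin (m+1)))).symm.continuous.comp_continuousOn this)
  have hac : ContinuousOn a U := Real.continuous_exp.comp_continuousOn (continuousOn_const.mul hΦc)
  have hbc : ContinuousOn b U := Real.continuous_exp.comp_continuousOn (continuousOn_const.mul hΦc)
  have hc2c : ContinuousOn c2 U := Real.continuous_exp.comp_continuousOn (continuousOn_const.mul hΦc)
  have hVc : ContinuousOn V U := (hac.smul hgc).sub (hbc.smul continuousOn_id)
  have hDc : ContinuousOn D U := by
    apply huc.mul
    exact (hac.mul ((hgc.norm).pow 2)).sub (hbc.mul (hgc.inner continuousOn_id))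
  have hQc : ContinuousOn Q U := by
    apply huc.mul
    refine ContinuousOn.add ?_ (hc2c.mul ((continuousOn_id (s := U)).norm.pow 2))
    exact (hac.mul ((hgc.norm).pow 2)).sub
      (continuousOn_const.mul (hbc.mul (hgc.inner continuousOn_id)))
  have hKcomp : IsCompact (closure Ω) := hbd.isCompact_closure
  have hQI : IntegrableOn Q Ω := ((hQc.mono hcl).integrableOn_compact hKcomp).mono_set
    subset_closure
  have hDI : IntegrableOn D Ω := ((hDc.mono hcl).integrableOn_compact hKcomp).mono_set
    subset_closure
  -- pointwise identity between goal integrand and Q - 2 D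
  have hQD : ∀ x, (-u x) *
      (Real.exp (-2 * Φ x) * ‖gradient u x‖ ^ 2 - ‖x‖ ^ 2 * Real.exp (2 * Φ x)) *
      Real.exp (N * Φ x) = Q x - 2 * D x := by
    intro x
    have e1 : Real.exp (-2 * Φ x) * Real.exp (N * Φ x) = a x := by
      rw [← Real.exp_add]; congr 1; ring
    have e2 : Real.exp (2 * Φ x) * Real.exp (N * Φ x) = c2 x := by
      rw [← Real.exp_add]; congr 1; ring
    simp only [hQ, hD]
    linear_combination (-(u x) * ‖gradient u x‖ ^ 2) * e1 + (u x * ‖x‖ ^ 2) * e2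
  -- pointwise sign of Q
  have hQle : ∀ x ∈ Ω, Q x ≤ 0 := by
    intro x hx
    have key : a x * ‖gradient u x‖ ^ 2 - 2 * (b x * ⟪gradient u x, x⟫) + c2 x * ‖x‖ ^ 2
        = c2 x * ‖Real.exp (-(2 * Φ x)) • gradient u x - x‖ ^ 2 := by
      rw [norm_sub_sq_real, norm_smul, real_inner_smul_left]
      have e1 : c2 x * (Real.exp (-(2 * Φ x)) * Real.exp (-(2 * Φ x))) = a x := by
        rw [hc2, ha, ← Real.exp_add, ← Real.exp_add]; congr 1; ring
      have e2 : c2 x * Real.exp (-(2 * Φ x)) = b x := by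
        rw [hc2, hb, ← Real.exp_add]; congr 1; ring
      have hne : ‖Real.exp (-(2 * Φ x))‖ = Real.exp (-(2 * Φ x)) :=
        Real.norm_of_nonneg (Real.exp_nonneg _)
      rw [hne]
      linear_combination (-(‖gradient u x‖ ^ 2)) * e1 + 2 * (inner ℝ (gradient u x) x : ℝ) * e2
    rw [hQ]
    simp only
    rw [key]
    have h1 : u x ≤ 0 := hsign x hx
    have h2 : 0 ≤ c2 x * ‖Real.exp (-(2 * Φ x)) • gradient u x - x‖ ^ 2 := by positivity
    exact mul_nonpos_iff.2 (Or.inr ⟨h1, h2⟩)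
  -- the divergence identity
  have hdiv0 : (∫ x in Ω, D x) = 0 := by
    have hΩU : Ω ⊆ U := fun x hx => hcl (subset_closure hx)
    -- existence of derivatives with divergence identity
    have hexists : ∀ x : EuclideanSpace ℝ (Fin (m+1)),
        ∃ L : EuclideanSpace ℝ (Fin (m+1)) →L[ℝ] EuclideanSpace ℝ (Fin (m+1)),
          (x ∈ Ω → HasFDerivAt Z L x ∧ ∑ i, (L (EuclideanSpace.single i 1)) i = D x)
          ∧ (x ∉ Ω → L = 0) := by
      intro x
      by_cases hx : x ∈ Ω
      · have hxU : x ∈ U := hΩU hx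
        have hax : HasFDerivAt a (Real.exp ((N - 2) * Φ x) • ((N - 2) • fderiv ℝ Φ x)) x :=
          HasFDerivAt.exp ((hΦd x hxU).const_mul (N - 2))
        have hbx : HasFDerivAt b (Real.exp (N * Φ x) • (N • fderiv ℝ Φ x)) x :=
          HasFDerivAt.exp ((hΦd x hxU).const_mul N)
        have hVx := (hax.smul (hgd x hxU)).sub (hbx.smul (hasFDerivAt_id x))
        have hρx := ((hud x hxU).mul (hud x hxU)).mul_const (2⁻¹ : ℝ)
        have hZx := hρx.smul hVx
        refine ⟨_, fun _ => ⟨hZx, ?_⟩, fun hnot => absurd hx hnot⟩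
        -- divergence computation
        simp only [ContinuousLinearMap.add_apply, ContinuousLinearMap.smul_apply,
          ContinuousLinearMap.sub_apply, ContinuousLinearMap.smulRight_apply,
          ContinuousLinearMap.comp_apply, ContinuousLinearMap.coe_id', id_eq,
          ContinuousLinearMap.mul_apply, PiLp.add_apply, PiLp.sub_apply, PiLp.smul_apply,
          smul_eq_mul, EuclideanSpace.single_apply, if_true]
        have hgcoord : ∀ i, (fderiv ℝ u x) (EuclideanSpace.single i 1) = gradient u x i :=
          fun i => (grad_coord u x i).symm
        have hφcoord : ∀ i, (fderiv ℝ Φ x) (EuclideanSpace.single i 1) = gradient Φ x i :=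
          fun i => (grad_coord Φ x i).symm
        simp only [hgcoord, hφcoord]
        have S2 := htrace x hxU
        have S3 : (∑ i, gradient Φ x i * gradient u x i) = ⟪gradient Φ x, gradient u x⟫ :=
          (inner_eq_sum _ _).symm
        have S5 : (∑ i, gradient Φ x i * x i) = ⟪gradient Φ x, x⟫ := (inner_eq_sum _ _).symm
        have S1 : (∑ i, gradient u x i * gradient u x i) = ‖gradient u x‖ ^ 2 := by
          rw [← real_inner_self_eq_norm_sq]
          exact (inner_eq_sum _ _).symm
        have S6 : (∑ i, gradient u x i * x i) = ⟪gradient u x, x⟫ := (inner_eq_sum _ _).symm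
        have Scard : (∑ _i : Fin (m+1), (1:ℝ)) = N := by simp [hN]
        trans ((u x * u x * 2⁻¹ * a x) * (∑ i, (G' x (EuclideanSpace.single i 1)) i)
            + (u x * u x * 2⁻¹ * (a x * (N-2))) * (∑ i, gradient Φ x i * gradient u x i)
            - (u x * u x * 2⁻¹ * b x) * (∑ _i : Fin (m+1), (1:ℝ))
            - (u x * u x * 2⁻¹ * (b x * N)) * (∑ i, gradient Φ x i * x i)
            + (u x * a x) * (∑ i, gradient u x i * gradient u x i)
            - (u x * b x) * (∑ i, gradient u x i * x i))
        · simp only [Finset.mul_sum, ← Finset.sum_add_distrib, ← Finset.sum_sub_distrib]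
          refine Finset.sum_congr rfl fun i _ => ?_
          rw [ha, hb]
          simp only [Pi.mul_apply, Pi.smul_apply, Pi.smul_apply', id_eq, Pi.sub_apply, id, PiLp.sub_apply, PiLp.smul_apply, smul_eq_mul]
          ring
        · rw [S2, S3, S5, S1, S6, Scard, hD]
          have hab : a x * Real.exp (2 * Φ x) = b x := by
            rw [ha, hb, ← Real.exp_add]; congr 1; ring
          have hcomm : (inner ℝ x (gradient Φ x) : ℝ) = ⟪gradient Φ x, x⟫ := real_inner_comm _ _
          linear_combination (u x * u x * 2⁻¹ * a x) * (hpde x hx)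
            + (u x * u x * 2⁻¹ * N * (1 + (inner ℝ x (gradient Φ x) : ℝ))) * hab
            + (u x * u x * 2⁻¹ * N * b x) * hcomm
      · exact ⟨0, fun h => absurd h hx, fun _ => rfl⟩
    choose Z' hZmem hZzero using hexists
    set Zt : EuclideanSpace ℝ (Fin (m+1)) → EuclideanSpace ℝ (Fin (m+1)) :=
      fun y => if y ∈ Ω then Z y else 0 with hZtdef
    have hZt_not : ∀ y, y ∉ Ω → Zt y = 0 := fun y hy => if_neg hy
    obtain ⟨R, hRpos, hRball⟩ : ∃ R, 0 < R ∧ closure Ω ⊆ ball 0 R := by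
      obtain ⟨R, hR1, hR2⟩ := hbd.closure.subset_ball_lt 0 0
      exact ⟨R, hR1, hR2⟩
    have hdall : ∀ y, HasFDerivAt Zt (Z' y) y := by
      intro y
      by_cases hy : y ∈ Ω
      · refine ((hZmem y hy).1).congr_of_eventuallyEq ?_
        filter_upwards [hop.mem_nhds hy] with z hz
        exact if_pos hz
      · rw [hZzero y hy]
        by_cases hyc : y ∈ closure Ω
        · -- frontier case : quadratic vanishing
          have hfr : y ∈ frontier Ω := by
            rw [frontier, hop.interior_eq]
            exact ⟨hyc, hy⟩
          have hu0 : u y = 0 := hdir y hfr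
          have hyU : y ∈ U := hcl hyc
          obtain ⟨ε, hεpos, hballU⟩ := Metric.isOpen_iff.1 hU y hyU
          have hr : 0 < ε/2 := by linarith
          have hrU : closedBall y (ε/2) ⊆ U :=
            (closedBall_subset_ball (by linarith)).trans hballU
          obtain ⟨M₁, hM₁⟩ := (isCompact_closedBall y (ε/2)).exists_bound_of_continuousOn
            (hu1.continuousOn.mono hrU)
          obtain ⟨M₂, hM₂⟩ := (isCompact_closedBall y (ε/2)).exists_bound_of_continuousOn
            (hVc.mono hrU)
          have hM₁0 : 0 ≤ M₁ := le_trans (norm_nonneg _) (hM₁ y (mem_closedBall_self hr.le))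
          have hM₂0 : 0 ≤ M₂ := le_trans (norm_nonneg _) (hM₂ y (mem_closedBall_self hr.le))
          have hlip : ∀ z ∈ closedBall y (ε/2), |u z| ≤ M₁ * ‖z - y‖ := by
            intro z hz
            have hd : ∀ w ∈ closedBall y (ε/2), DifferentiableAt ℝ u w := fun w hw =>
              (hu.differentiableOn two_ne_zero w (hrU hw)).differentiableAt
                (hU.mem_nhds (hrU hw))
            have := Convex.norm_image_sub_le_of_norm_fderiv_le hd
              (fun w hw => hM₁ w hw) (convex_closedBall y (ε/2))
              (mem_closedBall_self hr.le) hz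
            simpa [hu0, Real.norm_eq_abs] using this
          have hquad : ∀ z ∈ closedBall y (ε/2),
              ‖Zt z‖ ≤ (M₁ * M₁ * M₂ * 2⁻¹) * (‖z - y‖ * ‖z - y‖) := by
            intro z hz
            by_cases hzm : z ∈ Ω
            · have hZtz : Zt z = (u z * u z * 2⁻¹) • V z := if_pos hzm
              rw [hZtz, norm_smul, Real.norm_eq_abs, abs_mul, abs_mul]
              have h1 := hlip z hz
              have h2 := hM₂ z hz
              have h5 : |(2:ℝ)⁻¹| = 2⁻¹ := by norm_num
              rw [h5]
              nlinarith [abs_nonneg (u z), norm_nonneg (V z), norm_nonneg (z - y),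
                mul_le_mul h1 h1 (abs_nonneg (u z)) (by positivity : (0:ℝ) ≤ M₁ * ‖z - y‖)]
            · rw [hZt_not z hzm, norm_zero]
              positivity
          rw [hasFDerivAt_iff_isLittleO_nhds_zero]
          have hZty : Zt y = 0 := hZt_not y hy
          simp only [hZty, ContinuousLinearMap.zero_apply, sub_zero]
          rw [Asymptotics.isLittleO_iff]
          intro cε hcε
          have hCb : 0 ≤ M₁ * M₁ * M₂ * 2⁻¹ := by positivity
          have hδ : 0 < min (ε/2) (cε/(M₁ * M₁ * M₂ * 2⁻¹ + 1)) := lt_min hr (by positivity)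
          filter_upwards [Metric.ball_mem_nhds 0 hδ] with h hh
          rw [mem_ball_zero_iff] at hh
          have hz1 : y + h ∈ closedBall y (ε/2) := by
            rw [mem_closedBall, dist_eq_norm, add_sub_cancel_left]
            exact le_trans hh.le (min_le_left _ _)
          have hz2 : ‖h‖ < cε/(M₁ * M₁ * M₂ * 2⁻¹ + 1) :=
            lt_of_lt_of_le hh (min_le_right _ _)
          have h3 : ‖h‖ * (M₁ * M₁ * M₂ * 2⁻¹ + 1) ≤ cε := by
            rw [← le_div_iff₀ (by positivity)]
            exact hz2.le
          have h4 := hquad (y + h) hz1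
          rw [add_sub_cancel_left] at h4
          calc ‖Zt (y + h)‖ ≤ (M₁ * M₁ * M₂ * 2⁻¹) * (‖h‖ * ‖h‖) := h4
            _ ≤ cε * ‖h‖ := by nlinarith [norm_nonneg h]
        · have hev : ∀ᶠ z in nhds y, Zt z = 0 := by
            filter_upwards [isClosed_closure.isOpen_compl.mem_nhds hyc] with z hz
            exact if_neg fun h => hz (subset_closure h)
          refine (hasFDerivAt_const (0 : EuclideanSpace ℝ (Fin (m+1))) y).congr_of_eventuallyEq ?_
          filter_upwards [hev] with z hz
          rw [hz]
    have hsupp : ∀ y, R ≤ ‖y‖ → Zt y = 0 := by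
      intro y hy
      refine hZt_not y fun h => ?_
      have := hRball (subset_closure h)
      rw [mem_ball_zero_iff] at this
      linarith
    have hsupp' : ∀ y, R ≤ ‖y‖ → Z' y = 0 := by
      intro y hy
      refine hZzero y fun h => ?_
      have := hRball (subset_closure h)
      rw [mem_ball_zero_iff] at this
      linarith
    have hdivind : (fun y => ∑ i, (Z' y) (EuclideanSpace.single i 1) i) = Ω.indicator D := by
      funext y
      by_cases hy : y ∈ Ω
      · rw [Set.indicator_of_mem hy]
        exact (hZmem y hy).2
      · rw [Set.indicator_of_notMem hy, hZzero y hy]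
        simp
    have hInt : Integrable (Ω.indicator D) := hDI.integrable_indicator hop.measurableSet
    have h0 := integral_div_eq_zero Zt Z' hdall hRpos hsupp hsupp'
      (by rw [hdivind]; exact hInt)
    rw [hdivind, integral_indicator hop.measurableSet] at h0
    exact h0
  -- final conclusion
  have hstep : (∫ x in Ω, (-u x) *
      (Real.exp (-2 * Φ x) * ‖gradient u x‖ ^ 2 - ‖x‖ ^ 2 * Real.exp (2 * Φ x)) *
      Real.exp (N * Φ x)) = ∫ x in Ω, (Q x - 2 * D x) :=
    setIntegral_congr_fun hop.measurableSet (fun x _ => hQD x)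
  rw [hstep, integral_sub hQI (hDI.const_mul 2), integral_const_mul, hdiv0]
  have := setIntegral_nonpos (μ := volume) hop.measurableSet hQle
  linarith
end

section
/- Let n ≥ 1, let U be an open subset of E = EuclideanSpace ℝ (Fin n), and let u : U → ℝ be C³ with Δu(x) = n for all x ∈ U. Then for every x ∈ U, Δ(‖∇u‖²)(x) ≥ 2n; moreover, equality Δ(‖∇u‖²)(x) = 2n holds at x if and only if the Hessian of u at x is the identity, i.e. the second derivative of u at x, as a bilinear form, equals the inner product: D²u(x)[v,w] = ⟨v,w⟩ for all v, w ∈ E. -/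
open MeasureTheory Metric Set RealInnerProductSpace

/-!
Write `H` for the Hessian of `u` at `x`. Bochner's formula in flat space,
`½ Δ‖∇u‖² = ‖H‖² + ⟪∇(Δu), ∇u⟫` (Frobenius norm), follows from differentiating
`‖∇u‖² = ∑ᵢ (∂ᵢu)²` twice and commuting third derivatives: `∑ⱼ ∂ⱼ∂ⱼ∂ᵢu = ∂ᵢ(Δu)`.
As `Δu` is locally constant, `Δ‖∇u‖² = 2‖H‖²`, and since `tr H = n` we have
`‖H‖² = n + ‖H - 1‖²`. Hence `Δ‖∇u‖² = 2n + 2‖H - 1‖² ≥ 2n`, with equality exactly when `H = 1`.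
-/

open Filter Topology

theorem ContinuousLinearMap.ext_basis₂ {𝕜 E F G ι ι' : Type*} [NontriviallyNormedField 𝕜]
    [NormedAddCommGroup E] [NormedSpace 𝕜 E] [NormedAddCommGroup F] [NormedSpace 𝕜 F]
    [NormedAddCommGroup G] [NormedSpace 𝕜 G] (b : Module.Basis ι 𝕜 E) (b' : Module.Basis ι' 𝕜 F)
    {B B' : E →L[𝕜] F →L[𝕜] G} (h : ∀ i j, B (b i) (b' j) = B' (b i) (b' j)) : B = B' :=
  coe_injective <| b.ext fun i => coe_injective <| b'.ext fun j => h i j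

lemma contDiffAt_fderiv_apply {𝕜 E F : Type*} [NontriviallyNormedField 𝕜]
    [NormedAddCommGroup E] [NormedSpace 𝕜 E] [NormedAddCommGroup F] [NormedSpace 𝕜 F]
    {f : E → F} {x : E} {m : WithTop ℕ∞} (h : ContDiffAt 𝕜 (m + 1) f x) (v : E) :
    ContDiffAt 𝕜 m (fun y => fderiv 𝕜 f y v) x :=
  (h.fderiv_right le_rfl).clm_apply contDiffAt_const

section Gradient

variable {ι : Type*} [Fintype ι] [DecidableEq ι]

lemma gradient_apply_eq_fderiv (f : EuclideanSpace ℝ ι → ℝ) (x : EuclideanSpace ℝ ι) (i : ι) :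
    gradient f x i = fderiv ℝ f x (EuclideanSpace.single i 1) := by
  rw [← toDual_gradient, InnerProductSpace.toDual_apply_apply,
    EuclideanSpace.inner_single_right]
  simp

lemma inner_gradient_eq_sum (f g : EuclideanSpace ℝ ι → ℝ) (x : EuclideanSpace ℝ ι) :
    ⟪gradient f x, gradient g x⟫ =
      ∑ i, fderiv ℝ f x (EuclideanSpace.single i 1) * fderiv ℝ g x (EuclideanSpace.single i 1) := by
  rw [PiLp.inner_apply]
  simp only [gradient_apply_eq_fderiv, RCLike.inner_apply, conj_trivial, mul_comm]

lemma norm_gradient_sq_eq_sum (f : EuclideanSpace ℝ ι → ℝ) (x : EuclideanSpace ℝ ι) :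
    ‖gradient f x‖ ^ 2 = ∑ i, fderiv ℝ f x (EuclideanSpace.single i 1) ^ 2 := by
  rw [← real_inner_self_eq_norm_sq, inner_gradient_eq_sum]
  simp only [sq]

end Gradient

section SumSq

variable {ι : Type*} [Fintype ι]

lemma Matrix.sum_sq_eq_sum_sq_sub_one [DecidableEq ι] (A : Matrix ι ι ℝ) :
    ∑ i, ∑ j, A i j ^ 2 = ∑ i, ∑ j, (A - 1) i j ^ 2 + 2 * A.trace - Fintype.card ι := by
  have hrow (i : ι) : ∑ j, (A - 1) i j ^ 2 = ∑ j, A i j ^ 2 - 2 * A i i + 1 := by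
    simp only [Matrix.sub_apply, Matrix.one_apply, sub_sq, Finset.sum_add_distrib,
      Finset.sum_sub_distrib]
    simp
  simp only [hrow, Finset.sum_add_distrib, Finset.sum_sub_distrib, Matrix.trace, Matrix.diag,
    Finset.mul_sum, Finset.sum_const, Finset.card_univ, nsmul_eq_mul, mul_one]
  ring

lemma Matrix.sum_sq_eq_zero_iff (A : Matrix ι ι ℝ) : ∑ i, ∑ j, A i j ^ 2 = 0 ↔ A = 0 := by
  rw [Fintype.sum_eq_zero_iff_of_nonneg fun i => Finset.sum_nonneg fun j _ => sq_nonneg (A i j)]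
  simp only [funext_iff, Pi.zero_apply,
    Fintype.sum_eq_zero_iff_of_nonneg fun _ => sq_nonneg _, sq_eq_zero_iff]
  exact Matrix.ext_iff

end SumSq

section Hessian

variable {n : ℕ} {u f : EuclideanSpace ℝ (Fin n) → ℝ} {x : EuclideanSpace ℝ (Fin n)}

noncomputable def hessMatrix (u : EuclideanSpace ℝ (Fin n) → ℝ) (x : EuclideanSpace ℝ (Fin n)) :
    Matrix (Fin n) (Fin n) ℝ :=
  Matrix.of fun i j => hess u x (EuclideanSpace.single i 1) (EuclideanSpace.single j 1)

lemma trace_hessMatrix : (hessMatrix u x).trace = lap u x := rfl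

lemma hess_eq_fderiv_fderiv (h : DifferentiableAt ℝ (fderiv ℝ u) x)
    (v w : EuclideanSpace ℝ (Fin n)) :
    hess u x v w = fderiv ℝ (fderiv ℝ u) x w v := by
  simp [hess, fderiv_clm_apply h (differentiableAt_const v)]

lemma hess_comm (h : ContDiffAt ℝ 2 u x) (v w : EuclideanSpace ℝ (Fin n)) :
    hess u x v w = hess u x w v := by
  have hd : DifferentiableAt ℝ (fderiv ℝ u) x :=
    (h.fderiv_right (m := 1) le_rfl).differentiableAt one_ne_zero
  rw [hess_eq_fderiv_fderiv hd, hess_eq_fderiv_fderiv hd]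
  exact h.isSymmSndFDerivAt (by simp [minSmoothness_of_isRCLikeNormedField]) w v

lemma hess_sum {ι : Type*} (s : Finset ι) {F : ι → EuclideanSpace ℝ (Fin n) → ℝ}
    (h : ∀ i ∈ s, ContDiffAt ℝ 2 (F i) x) (v w : EuclideanSpace ℝ (Fin n)) :
    hess (fun y => ∑ i ∈ s, F i y) x v w = ∑ i ∈ s, hess (F i) x v w := by
  have hnear : (fun y => fderiv ℝ (fun y => ∑ i ∈ s, F i y) y v)
      =ᶠ[𝓝 x] fun y => ∑ i ∈ s, fderiv ℝ (F i) y v := by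
    filter_upwards [(eventually_all_finset s).2 fun i hi => (h i hi).eventually (by simp)]
      with y hy
    simp [fderiv_fun_sum fun i hi => (hy i hi).differentiableAt (by simp)]
  rw [hess, hnear.fderiv_eq, fderiv_fun_sum fun i hi =>
    (contDiffAt_fderiv_apply (m := 1) (h i hi) v).differentiableAt one_ne_zero]
  simp [hess]

lemma lap_sum {ι : Type*} (s : Finset ι) {F : ι → EuclideanSpace ℝ (Fin n) → ℝ}
    (h : ∀ i ∈ s, ContDiffAt ℝ 2 (F i) x) :
    lap (fun y => ∑ i ∈ s, F i y) x = ∑ i ∈ s, lap (F i) x := by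
  simp only [lap, hess_sum s h]
  exact Finset.sum_comm

lemma hess_sq (h : ContDiffAt ℝ 2 f x) (v w : EuclideanSpace ℝ (Fin n)) :
    hess (fun y => f y ^ 2) x v w =
      2 * (fderiv ℝ f x v * fderiv ℝ f x w) + 2 * f x * hess f x v w := by
  have hnear : (fun y => fderiv ℝ (fun y => f y ^ 2) y v)
      =ᶠ[𝓝 x] fun y => 2 * f y * fderiv ℝ f y v := by
    filter_upwards [h.eventually (by simp)] with y hy
    simp [((hy.differentiableAt (by simp)).hasFDerivAt.pow 2).fderiv]
  have hd : HasFDerivAt (fun y => 2 * f y * fderiv ℝ f y v)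
      ((2 * f x) • fderiv ℝ (fun y => fderiv ℝ f y v) x
        + fderiv ℝ f x v • (2 : ℝ) • fderiv ℝ f x) x :=
    ((h.differentiableAt (by simp)).hasFDerivAt.const_mul 2).mul
      ((contDiffAt_fderiv_apply (m := 1) h v).differentiableAt one_ne_zero).hasFDerivAt
  rw [hess, hnear.fderiv_eq, hd.fderiv]
  simp only [add_apply, smul_apply, smul_eq_mul, hess]
  ring

lemma lap_sq (h : ContDiffAt ℝ 2 f x) :
    lap (fun y => f y ^ 2) x =
      2 * ∑ j, fderiv ℝ f x (EuclideanSpace.single j 1) ^ 2 + 2 * f x * lap f x := by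
  simp only [lap, hess_sq h]
  simp only [Finset.sum_add_distrib, Finset.mul_sum, sq]

lemma fderiv_hess_comm (h : ContDiffAt ℝ 3 u x) (v w a : EuclideanSpace ℝ (Fin n)) :
    fderiv ℝ (fun y => hess u y v w) x a = fderiv ℝ (fun y => hess u y a v) x w := by
  have hsymm : (fun y => hess u y v a) =ᶠ[𝓝 x] fun y => hess u y a v := by
    filter_upwards [h.eventually (by simp)] with y hy
    exact hess_comm (hy.of_le (by norm_num)) v a
  calc fderiv ℝ (fun y => hess u y v w) x a
      = hess (fun y => fderiv ℝ u y v) x w a := rfl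
    _ = hess (fun y => fderiv ℝ u y v) x a w :=
        hess_comm (contDiffAt_fderiv_apply (m := 2) h v) w a
    _ = fderiv ℝ (fun y => hess u y a v) x w := by
        rw [hess, ← hsymm.fderiv_eq]
        rfl

lemma differentiableAt_hess (h : ContDiffAt ℝ 3 u x) (v w : EuclideanSpace ℝ (Fin n)) :
    DifferentiableAt ℝ (fun y => hess u y v w) x :=
  (contDiffAt_fderiv_apply (m := 1) (contDiffAt_fderiv_apply (m := 2) h v) w).differentiableAt
    one_ne_zero

lemma lap_fderiv_apply (h : ContDiffAt ℝ 3 u x) (v : EuclideanSpace ℝ (Fin n)) :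
    lap (fun y => fderiv ℝ u y v) x = fderiv ℝ (lap u) x v := by
  let e (j : Fin n) : EuclideanSpace ℝ (Fin n) := EuclideanSpace.single j 1
  calc lap (fun y => fderiv ℝ u y v) x
      = ∑ j, fderiv ℝ (fun y => hess u y v (e j)) x (e j) := rfl
    _ = ∑ j, fderiv ℝ (fun y => hess u y (e j) (e j)) x v :=
        Finset.sum_congr rfl fun j _ =>
          (fderiv_hess_comm h v (e j) (e j)).trans (fderiv_hess_comm h (e j) v (e j))
    _ = fderiv ℝ (lap u) x v := by
        rw [show lap u = fun y => ∑ j, hess u y (e j) (e j) from rfl,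
          fderiv_fun_sum fun j _ => differentiableAt_hess h (e j) (e j)]
        simp

theorem lap_norm_gradient_sq (h : ContDiffAt ℝ 3 u x) :
    lap (fun y => ‖gradient u y‖ ^ 2) x =
      2 * ∑ i, ∑ j, hessMatrix u x i j ^ 2 + 2 * ⟪gradient (lap u) x, gradient u x⟫ := by
  have hD (v : EuclideanSpace ℝ (Fin n)) : ContDiffAt ℝ 2 (fun y => fderiv ℝ u y v) x :=
    contDiffAt_fderiv_apply (m := 2) h v
  simp only [norm_gradient_sq_eq_sum]
  rw [lap_sum _ fun i _ => (hD _).pow 2]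
  simp only [lap_sq (hD _), lap_fderiv_apply h, Finset.sum_add_distrib, ← Finset.mul_sum,
    mul_assoc, inner_gradient_eq_sum]
  congr 2
  exact Finset.sum_congr rfl fun i _ => mul_comm _ _

lemma hess_eq_inner_iff (h : DifferentiableAt ℝ (fderiv ℝ u) x) :
    (∀ v w, hess u x v w = ⟪v, w⟫) ↔ hessMatrix u x = 1 := by
  refine ⟨fun H => Matrix.ext fun i j => ?_, fun H v w => ?_⟩
  · simp [hessMatrix, H, Matrix.one_apply, EuclideanSpace.inner_single_left]
  · let b := (EuclideanSpace.basisFun (Fin n) ℝ).toBasis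
    have hD : fderiv ℝ (fderiv ℝ u) x = innerSL ℝ :=
      ContinuousLinearMap.ext_basis₂ b b fun i j => by
        change _ = ⟪b i, b j⟫
        simpa [b, hessMatrix, hess_eq_fderiv_fderiv h, Matrix.one_apply, eq_comm,
          EuclideanSpace.inner_single_left] using congr_fun₂ H j i
    rw [hess_eq_fderiv_fderiv h, hD, innerSL_apply_apply, real_inner_comm]

end Hessian

theorem stmt_11_general {n : ℕ} (U : Set (EuclideanSpace ℝ (Fin n))) (hU : IsOpen U)
    (u : EuclideanSpace ℝ (Fin n) → ℝ) (hu : ContDiffOn ℝ 3 u U)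
    (hpde : ∀ x ∈ U, lap u x = (n : ℝ)) :
    ∀ x ∈ U,
      2 * (n : ℝ) ≤ lap (fun y => ‖gradient u y‖ ^ 2) x ∧
      (lap (fun y => ‖gradient u y‖ ^ 2) x = 2 * (n : ℝ) ↔
        ∀ v w : EuclideanSpace ℝ (Fin n), hess u x v w = ⟪v, w⟫) := by
  intro x hx
  have hu3 : ContDiffAt ℝ 3 u x := hu.contDiffAt (hU.mem_nhds hx)
  have hgrad_lap : gradient (lap u) x = 0 := by
    have hconst : lap u =ᶠ[𝓝 x] fun _ => (n : ℝ) := eventuallyEq_of_mem (hU.mem_nhds hx) hpde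
    rw [hconst.gradient_eq, gradient_fun_const]
  have hbochner : lap (fun y => ‖gradient u y‖ ^ 2) x =
      2 * n + 2 * ∑ i, ∑ j, (hessMatrix u x - 1) i j ^ 2 := by
    rw [lap_norm_gradient_sq hu3, hgrad_lap, inner_zero_left, Matrix.sum_sq_eq_sum_sq_sub_one,
      trace_hessMatrix, hpde x hx, Fintype.card_fin]
    ring
  have hdefect : 0 ≤ ∑ i, ∑ j, (hessMatrix u x - 1) i j ^ 2 :=
    Finset.sum_nonneg fun i _ => Finset.sum_nonneg fun j _ => sq_nonneg _
  refine ⟨by linarith, ?_⟩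
  rw [hess_eq_inner_iff ((hu3.fderiv_right (m := 1) (by norm_num)).differentiableAt one_ne_zero),
    ← sub_eq_zero (a := hessMatrix u x), ← Matrix.sum_sq_eq_zero_iff, hbochner]
  constructor <;> intro h <;> linarith

/-- Pointwise Bochner–Weitzenböck + Newton inequality for solutions of `Δu = n`,
with the equality case `∇²u = Id`. -/
theorem stmt_11 {n : ℕ} (hn : 1 ≤ n) (U : Set (EuclideanSpace ℝ (Fin n))) (hU : IsOpen U)
    (u : EuclideanSpace ℝ (Fin n) → ℝ) (hu : ContDiffOn ℝ 3 u U)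
    (hpde : ∀ x ∈ U, lap u x = (n : ℝ)) :
    ∀ x ∈ U,
      2 * (n : ℝ) ≤ lap (fun y => ‖gradient u y‖ ^ 2) x ∧
      (lap (fun y => ‖gradient u y‖ ^ 2) x = 2 * (n : ℝ) ↔
        ∀ v w : EuclideanSpace ℝ (Fin n), hess u x v w = ⟪v, w⟫) :=
  stmt_11_general U hU u hu hpde
end
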